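/- arXiv:1812.08037 — 18 statements merged into one kernel-verified Lean document; each statement's English description precedes it below -/
import Mathlib

section
/- Let x, y ≥ 0 with x ≥ y and a ∈ [1,2]. Then 2^a · x^(a-1) · y ≤ (x+y)^a − (x−y)^a ≤ 2a · x^(a-1) · y. -/
/-!
Lower bound: with `u = x + y`, `v = x - y`, write `u ^ a = u ^ (2 - a) * (u * u) ^ (a - 1)`
and split `u = (u - v) + v`, `u * u = (u - v) * (u + v) + v * v`; the two-point Hölder
inequality with exponents `2 - a`, `a - 1` gives `u ^ a ≥ (u - v) * (u + v) ^ (a - 1) + v ^ a`.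

Upper bound: the derivative in `y` of `(x + y) ^ a - (x - y) ^ a` is
`a * ((x + y) ^ (a - 1) + (x - y) ^ (a - 1))`, which by concavity of `t ↦ t ^ (a - 1)` is at most
`2 * a * x ^ (a - 1)`.
-/

open Real Set

namespace Real

lemma rpow_mul_rpow_le_mul_add {θ η A B p q : ℝ} (hθ : 0 ≤ θ) (hη : 0 ≤ η) (hθη : θ + η = 1)
    (hA : 0 < A) (hB : 0 < B) (hp : 0 ≤ p) (hq : 0 ≤ q) :
    p ^ θ * q ^ η ≤ A ^ θ * B ^ η * (θ * (p / A) + η * (q / B)) := by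
  have hmean := geom_mean_le_arith_mean2_weighted hθ hη (div_nonneg hp hA.le)
    (div_nonneg hq hB.le) hθη
  calc p ^ θ * q ^ η = A ^ θ * B ^ η * ((p / A) ^ θ * (q / B) ^ η) := by
        rw [div_rpow hp hA.le, div_rpow hq hB.le]
        field_simp
    _ ≤ _ := by gcongr

/-- Two-point Hölder inequality. -/
lemma rpow_mul_rpow_add_rpow_mul_rpow_le {θ η p q u v : ℝ} (hθ : 0 ≤ θ) (hη : 0 ≤ η)
    (hθη : θ + η = 1) (hp : 0 ≤ p) (hq : 0 ≤ q) (hu : 0 ≤ u) (hv : 0 ≤ v) :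
    p ^ θ * q ^ η + u ^ θ * v ^ η ≤ (p + u) ^ θ * (q + v) ^ η := by
  rcases hθ.eq_or_lt with rfl | hθ'
  · simp [show η = 1 by linarith]
  rcases hη.eq_or_lt with rfl | hη'
  · simp [show θ = 1 by linarith]
  rcases (add_nonneg hp hu).eq_or_lt with hpu | hpu
  · simp [show p = 0 by linarith, show u = 0 by linarith, zero_rpow hθ'.ne']
  rcases (add_nonneg hq hv).eq_or_lt with hqv | hqv
  · simp [show q = 0 by linarith, show v = 0 by linarith, zero_rpow hη'.ne']
  have h₁ := rpow_mul_rpow_le_mul_add hθ hη hθη hpu hqv hp hq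
  have h₂ := rpow_mul_rpow_le_mul_add hθ hη hθη hpu hqv hu hv
  have hweights : θ * (p / (p + u)) + η * (q / (q + v)) + (θ * (u / (p + u)) + η * (v / (q + v)))
      = 1 := by
    field_simp
    linear_combination (p + u) * (q + v) * hθη
  have h := add_le_add h₁ h₂
  rwa [← mul_add, hweights, mul_one] at h

lemma rpow_mul_mul_rpow {θ η w c : ℝ} (hθη : θ + η = 1) (hw : 0 ≤ w) (hc : 0 ≤ c) :
    w ^ θ * (w * c) ^ η = w * c ^ η := by
  rw [mul_rpow hw hc, ← mul_assoc, ← rpow_add' hw (by simp [hθη]), hθη, rpow_one]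

lemma rpow_add_rpow_le_two_mul_rpow {b p q : ℝ} (hb₀ : 0 ≤ b) (hb₁ : b ≤ 1) (hp : 0 ≤ p)
    (hq : 0 ≤ q) : p ^ b + q ^ b ≤ 2 * ((p + q) / 2) ^ b := by
  have h := (concaveOn_rpow hb₀ hb₁).2 (mem_Ici.2 hp) (mem_Ici.2 hq)
    (by norm_num : (0 : ℝ) ≤ 1 / 2) (by norm_num : (0 : ℝ) ≤ 1 / 2) (by norm_num)
  simp only [smul_eq_mul] at h
  rw [show 1 / 2 * p + 1 / 2 * q = (p + q) / 2 by ring] at h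
  linarith

lemma sub_mul_add_rpow_le_rpow_sub_rpow {u v a : ℝ} (hv : 0 ≤ v) (hvu : v ≤ u) (ha₁ : 1 ≤ a)
    (ha₂ : a ≤ 2) : (u - v) * (u + v) ^ (a - 1) ≤ u ^ a - v ^ a := by
  have hθη : (2 - a) + (a - 1) = 1 := by ring
  have hpow : ∀ w : ℝ, 0 ≤ w → w ^ (2 - a) * (w * w) ^ (a - 1) = w ^ a := fun w hw ↦ by
    rw [rpow_mul_mul_rpow hθη hw hw, ← rpow_one_add' hw (by linarith), add_sub_cancel]
  have h := rpow_mul_rpow_add_rpow_mul_rpow_le (by linarith) (by linarith) hθη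
    (sub_nonneg.2 hvu) (mul_nonneg (sub_nonneg.2 hvu) (by linarith : 0 ≤ u + v)) hv
    (mul_nonneg hv hv)
  rw [rpow_mul_mul_rpow (c := u + v) hθη (sub_nonneg.2 hvu) (by linarith), hpow v hv,
    show u - v + v = u by ring, show (u - v) * (u + v) + v * v = u * u by ring,
    hpow u (by linarith)] at h
  linarith

lemma rpow_add_sub_rpow_sub_le {x t a : ℝ} (ht : 0 ≤ t) (htx : t ≤ x) (ha₁ : 1 ≤ a)
    (ha₂ : a ≤ 2) : (x + t) ^ a - (x - t) ^ a ≤ 2 * a * x ^ (a - 1) * t := by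
  set f : ℝ → ℝ := fun s ↦ 2 * a * x ^ (a - 1) * s - ((x + s) ^ a - (x - s) ^ a)
  have hf : ∀ s, HasDerivAt f
      (2 * a * x ^ (a - 1) - a * ((x + s) ^ (a - 1) + (x - s) ^ (a - 1))) s := fun s ↦ by
    have hadd := ((hasDerivAt_id' s).const_add x).rpow_const (p := a) (Or.inr ha₁)
    have hsub := ((hasDerivAt_id' s).const_sub x).rpow_const (p := a) (Or.inr ha₁)
    exact (((hasDerivAt_id' s).const_mul _).sub (hadd.sub hsub)).congr_deriv (by ring)
  have hmono : MonotoneOn f (Icc 0 x) := by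
    have hdiff : Differentiable ℝ f := fun s ↦ (hf s).differentiableAt
    refine monotoneOn_of_deriv_nonneg (convex_Icc 0 x) hdiff.continuous.continuousOn
      hdiff.differentiableOn fun s hs ↦ ?_
    rw [interior_Icc] at hs
    rw [(hf s).deriv]
    have hconc := rpow_add_rpow_le_two_mul_rpow (b := a - 1) (by linarith) (by linarith)
      (by linarith [hs.1] : 0 ≤ x + s) (by linarith [hs.2] : 0 ≤ x - s)
    rw [show (x + s + (x - s)) / 2 = x by ring] at hconc
    linarith [mul_le_mul_of_nonneg_left hconc (by linarith : 0 ≤ a)]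
  have := hmono ⟨le_rfl, ht.trans htx⟩ ⟨ht, htx⟩ ht
  simp only [f, mul_zero, add_zero, sub_zero, sub_self] at this
  linarith

end Real

theorem stmt_0 (x y a : ℝ) (hy : 0 ≤ y) (hxy : y ≤ x) (ha1 : 1 ≤ a) (ha2 : a ≤ 2) :
    (2 : ℝ) ^ a * x ^ (a - 1) * y ≤ (x + y) ^ a - (x - y) ^ a ∧
    (x + y) ^ a - (x - y) ^ a ≤ 2 * a * x ^ (a - 1) * y := by
  refine ⟨?_, rpow_add_sub_rpow_sub_le hy hxy ha1 ha2⟩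
  have h := sub_mul_add_rpow_le_rpow_sub_rpow (u := x + y) (v := x - y) (by linarith)
    (by linarith) ha1 ha2
  have hx : 0 ≤ x := hy.trans hxy
  calc (2 : ℝ) ^ a * x ^ (a - 1) * y = (2 * y) * (2 * x) ^ (a - 1) := by
        have h2 : (2 : ℝ) ^ a = 2 * 2 ^ (a - 1) := by
          rw [← rpow_one_add' zero_le_two (by linarith)]
          ring_nf
        rw [mul_rpow zero_le_two hx, h2]
        ring
    _ = (x + y - (x - y)) * (x + y + (x - y)) ^ (a - 1) := by ring_nf
    _ ≤ _ := h
end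

section
/- Let x, y ≥ 0 and a ∈ [1,2]. Then (x+y)^a − |x−y|^a ≤ 2a · min(x·y^(a-1), x^(a-1)·y). -/
/-! By symmetry let `y ≤ x`. The function `t ↦ (x + t) ^ a - (x - t) ^ a` has derivative
`a ((x + t) ^ (a - 1) + (x - t) ^ (a - 1))`, which is at most `2 a x ^ (a - 1)` on `[0, x]` by
concavity of `s ↦ s ^ (a - 1)`; the mean value inequality then bounds the left side by
`2 a x ^ (a - 1) y`. Since `a - 1 ≤ 1`, this is the smaller of the two terms in the minimum. -/

open Real Set

namespace Real

lemma rpow_add_add_rpow_sub_le {p x t : ℝ} (hp0 : 0 ≤ p) (hp1 : p ≤ 1) (ht : 0 ≤ t)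
    (htx : t ≤ x) : (x + t) ^ p + (x - t) ^ p ≤ 2 * x ^ p := by
  have h := (concaveOn_rpow hp0 hp1).2 (mem_Ici.2 (by linarith : 0 ≤ x + t))
    (mem_Ici.2 (by linarith : 0 ≤ x - t)) (by norm_num : (0 : ℝ) ≤ 1 / 2)
    (by norm_num : (0 : ℝ) ≤ 1 / 2) (by norm_num)
  rw [smul_eq_mul, smul_eq_mul, smul_eq_mul, smul_eq_mul,
    show 1 / 2 * (x + t) + 1 / 2 * (x - t) = x by ring] at h
  linarith

lemma rpow_mul_le_mul_rpow_of_le {p x y : ℝ} (hp1 : p ≤ 1) (hy : 0 ≤ y) (hyx : y ≤ x) :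
    x ^ p * y ≤ x * y ^ p := by
  have hx : 0 ≤ x := hy.trans hyx
  calc x ^ p * y = x ^ p * y ^ p * y ^ (1 - p) := by
        rw [mul_assoc, ← rpow_add' hy (by norm_num), add_sub_cancel, rpow_one]
    _ ≤ x ^ p * y ^ p * x ^ (1 - p) := by gcongr
    _ = x * y ^ p := by
        rw [mul_right_comm, ← rpow_add' hx (by norm_num), add_sub_cancel, rpow_one, mul_comm]

lemma add_rpow_sub_sub_rpow_le {a x y : ℝ} (ha1 : 1 ≤ a) (ha2 : a ≤ 2) (hy : 0 ≤ y)
    (hyx : y ≤ x) : (x + y) ^ a - (x - y) ^ a ≤ 2 * a * (x ^ (a - 1) * y) := by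
  set G : ℝ → ℝ := fun t => (x + t) ^ a - (x - t) ^ a
  have hG : ∀ t, HasDerivAt G (a * (x + t) ^ (a - 1) + a * (x - t) ^ (a - 1)) t := fun t => by
    have := (((hasDerivAt_id' t).const_add x).rpow_const (Or.inr ha1)).fun_sub
      (((hasDerivAt_id' t).const_sub x).rpow_const (Or.inr ha1))
    exact this.congr_deriv (by ring)
  have hG_diff : Differentiable ℝ G := fun t => (hG t).differentiableAt
  have hG_deriv_le : ∀ t ∈ interior (Icc 0 x), deriv G t ≤ 2 * a * x ^ (a - 1) := by
    intro t ht
    rw [interior_Icc] at ht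
    rw [(hG t).deriv]
    have := rpow_add_add_rpow_sub_le (by linarith : 0 ≤ a - 1) (by linarith) ht.1.le ht.2.le
    nlinarith
  have := (convex_Icc 0 x).image_sub_le_mul_sub_of_deriv_le hG_diff.continuous.continuousOn
    hG_diff.differentiableOn hG_deriv_le 0 (left_mem_Icc.2 (hy.trans hyx)) y ⟨hy, hyx⟩ hy
  simpa [G, mul_assoc] using this

end Real

theorem stmt_1 (x y a : ℝ) (hx : 0 ≤ x) (hy : 0 ≤ y) (ha1 : 1 ≤ a) (ha2 : a ≤ 2) :
    (x + y) ^ a - |x - y| ^ a ≤ 2 * a * min (x * y ^ (a - 1)) (x ^ (a - 1) * y) := by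
  wlog hyx : y ≤ x generalizing x y
  · simpa only [abs_sub_comm, add_comm, min_comm, mul_comm] using
      this y x hy hx (le_of_not_ge hyx)
  rw [abs_of_nonneg (sub_nonneg.2 hyx),
    min_eq_right (rpow_mul_le_mul_rpow_of_le (by linarith) hy hyx)]
  exact add_rpow_sub_sub_rpow_le ha1 ha2 hy hyx
end

section
/- Let x ≥ y ≥ 0 and a ∈ [1,2]. Then (x+y)^(a-1)·(x−y) ≤ x^a − y^a ≤ a·(x−y)·((x+y)/2)^(a-1). -/
/-!
Write `m = (x + y) / 2`, `d = (x - y) / 2` and `F t = (m + t) ^ a - (m - t) ^ a`, so that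
`F d = x ^ a - y ^ a`. Because `t ↦ t ^ (a - 1)` is concave for `a ∈ [1, 2]`, the derivative
`F' t = a ((m + t) ^ (a - 1) + (m - t) ^ (a - 1))` decreases on `[0, m]`: `F` is concave there.
Since `F 0 = 0`, concavity squeezes the slope `F d / d` between the chord slope `F m / m` and the
tangent slope `F' 0 = 2 a m ^ (a - 1)`; these are the two inequalities.
-/

open Real Set

theorem ConcaveOn.map_add_add_map_sub_le {s : Set ℝ} {f : ℝ → ℝ} (hf : ConcaveOn ℝ s f)
    {c u v : ℝ} (hlo : c - v ∈ s) (hhi : c + v ∈ s) (hu : 0 ≤ u) (huv : u ≤ v) :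
    f (c + v) + f (c - v) ≤ f (c + u) + f (c - u) := by
  rcases huv.eq_or_lt with rfl | huv
  · rfl
  have hv : 0 < v := by linarith
  obtain ⟨p, q, hp, hq, hpq, hplus, hminus⟩ :
      ∃ p q : ℝ, 0 ≤ p ∧ 0 ≤ q ∧ p + q = 1 ∧
        p • (c + v) + q • (c - v) = c + u ∧ q • (c + v) + p • (c - v) = c - u :=
    ⟨(v + u) / (2 * v), (v - u) / (2 * v), by positivity,
      div_nonneg (by linarith) (by linarith), by field_simp; ring,
      by simp only [smul_eq_mul]; field_simp; ring, by simp only [smul_eq_mul]; field_simp; ring⟩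
  have h₁ := hf.2 hhi hlo hp hq hpq
  have h₂ := hf.2 hhi hlo hq hp (by linarith)
  rw [hplus] at h₁
  rw [hminus] at h₂
  simp only [smul_eq_mul] at h₁ h₂
  linear_combination h₁ + h₂ - (f (c + v) + f (c - v)) * hpq

theorem hasDerivAt_rpow_add_sub_rpow_sub {a m t : ℝ} (h₁ : 0 < m + t) (h₂ : 0 < m - t) :
    HasDerivAt (fun s => (m + s) ^ a - (m - s) ^ a)
      (a * ((m + t) ^ (a - 1) + (m - t) ^ (a - 1))) t := by
  have d₁ := ((hasDerivAt_id t).const_add m).rpow_const (p := a) (Or.inl h₁.ne')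
  have d₂ := ((hasDerivAt_id t).const_sub m).rpow_const (p := a) (Or.inl h₂.ne')
  exact (d₁.sub d₂).congr_deriv (by simp only [id]; ring)

theorem concaveOn_rpow_add_sub_rpow_sub {a m : ℝ} (ha₁ : 1 ≤ a) (ha₂ : a ≤ 2) :
    ConcaveOn ℝ (Icc 0 m) (fun t => (m + t) ^ a - (m - t) ^ a) := by
  have hderiv : ∀ t ∈ Ioo 0 m, HasDerivAt (fun s => (m + s) ^ a - (m - s) ^ a)
      (a * ((m + t) ^ (a - 1) + (m - t) ^ (a - 1))) t :=
    fun t ht => hasDerivAt_rpow_add_sub_rpow_sub (by linarith [ht.1, ht.2]) (by linarith [ht.2])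
  refine AntitoneOn.concaveOn_of_deriv (convex_Icc 0 m) ?_ ?_ ?_
  · have hpow : Continuous fun t : ℝ => t ^ a := continuous_rpow_const (by linarith)
    exact ((hpow.comp (continuous_const.add continuous_id)).sub
      (hpow.comp (continuous_const.sub continuous_id))).continuousOn
  · rw [interior_Icc]
    exact fun t ht => (hderiv t ht).differentiableAt.differentiableWithinAt
  · rw [interior_Icc]
    intro u hu v hv huv
    rw [(hderiv u hu).deriv, (hderiv v hv).deriv]
    refine mul_le_mul_of_nonneg_left ?_ (by linarith)
    exact (concaveOn_rpow (by linarith) (by linarith)).map_add_add_map_sub_le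
      (mem_Ici.2 (by linarith [hv.2])) (mem_Ici.2 (by linarith [hv.1, hv.2])) hu.1.le huv

theorem rpow_add_sub_rpow_sub_bounds {a m d : ℝ} (ha₁ : 1 ≤ a) (ha₂ : a ≤ 2) (hd : 0 < d)
    (hdm : d ≤ m) :
    d * (2 * m) ^ a ≤ m * ((m + d) ^ a - (m - d) ^ a) ∧
    (m + d) ^ a - (m - d) ^ a ≤ 2 * a * m ^ (a - 1) * d := by
  set F := fun t => (m + t) ^ a - (m - t) ^ a with hF_def
  have hF : ConcaveOn ℝ (Icc 0 m) F := concaveOn_rpow_add_sub_rpow_sub ha₁ ha₂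
  have h0 : (0 : ℝ) ∈ Icc 0 m := ⟨le_rfl, hd.le.trans hdm⟩
  have hdI : d ∈ Icc 0 m := ⟨hd.le, hdm⟩
  have hmI : m ∈ Icc 0 m := ⟨h0.2, le_rfl⟩
  have hchord : slope F 0 m ≤ slope F 0 d :=
    hF.antitoneOn_slope_gt h0 ⟨hdI, hd⟩ ⟨hmI, hd.trans_le hdm⟩ hdm
  have htangent : slope F 0 d ≤ a * (m ^ (a - 1) + m ^ (a - 1)) := by
    have hF' := hasDerivAt_rpow_add_sub_rpow_sub (a := a) (t := 0) (m := m) (by linarith)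
      (by linarith)
    simp only [add_zero, sub_zero] at hF'
    exact hF.slope_le_of_hasDerivAt h0 hdI hd hF'
  have hF0 : F 0 = 0 := by simp [hF_def]
  have hFm : F m = (2 * m) ^ a := by
    simp only [hF_def, sub_self, zero_rpow (by linarith : a ≠ 0), sub_zero, two_mul]
  simp only [slope_def_field, hF0, sub_zero] at hchord htangent
  rw [div_le_div_iff₀ (by linarith) hd, hFm] at hchord
  rw [div_le_iff₀ hd] at htangent
  constructor <;> linarith

theorem stmt_2 (x y a : ℝ) (hy : 0 ≤ y) (hxy : y ≤ x) (ha1 : 1 ≤ a) (ha2 : a ≤ 2) :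
    (x + y) ^ (a - 1) * (x - y) ≤ x ^ a - y ^ a ∧
    x ^ a - y ^ a ≤ a * (x - y) * ((x + y) / 2) ^ (a - 1) := by
  rcases hxy.eq_or_lt with rfl | hlt
  · simp
  obtain ⟨hchord, htangent⟩ :=
    rpow_add_sub_rpow_sub_bounds (m := (x + y) / 2) (d := (x - y) / 2) ha1 ha2
      (by linarith) (by linarith)
  rw [show (x + y) / 2 + (x - y) / 2 = x by ring, show (x + y) / 2 - (x - y) / 2 = y by ring]
    at hchord htangent
  rw [mul_div_cancel₀ _ two_ne_zero] at hchord
  constructor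
  · rw [rpow_sub_one (by linarith), div_mul_eq_mul_div, div_le_iff₀ (by linarith)]
    linarith
  · linarith
end

section
/- Let α ∈ [1/2, 1] and x, y ≥ 0. Then (x+y)^(2α) − (x^α − y^α)^2 ≤ (4xy)^α. -/
/-!
With `x = a²`, `y = b²`, `p = 2α` and `B = a / b`, dividing by `(ab)^p` turns the inequality into
`(B + B⁻¹)^p ≤ B^p + B⁻¹^p + 2^p - 2`, an equality at `B = 1`. The difference of the two sides
is monotone on `[1, ∞)`: its derivative has the sign of `B^p - B⁻¹^p - (B - B⁻¹)(B + B⁻¹)^(p-1)`,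
which is nonnegative by two Bernoulli inequalities with exponent `p - 1 ∈ [0, 1]`.
-/

open Real Set

lemma one_sub_mul_one_add_rpow_le {p z : ℝ} (hp1 : 1 ≤ p) (hp2 : p ≤ 2) (hz0 : 0 ≤ z)
    (hz1 : z ≤ 1) : (1 - z) * (1 + z) ^ (p - 1) ≤ 1 - z ^ p := by
  have hbern_one_add : (1 + z) ^ (p - 1) ≤ 1 + (p - 1) * z :=
    rpow_one_add_le_one_add_mul_self (by linarith) (by linarith) (by linarith)
  have hbern_self : z ^ (p - 1) ≤ 1 + (p - 1) * (z - 1) := by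
    simpa using rpow_one_add_le_one_add_mul_self (s := z - 1) (by linarith) (p := p - 1)
      (by linarith) (by linarith)
  have hzp : z ^ p = z * z ^ (p - 1) := by
    rw [← rpow_one_add' hz0 (by linarith), add_sub_cancel]
  calc (1 - z) * (1 + z) ^ (p - 1) ≤ (1 - z) * (1 + (p - 1) * z) := by gcongr
    _ = 1 - z * (1 + (p - 1) * (z - 1)) := by ring
    _ ≤ 1 - z ^ p := by rw [hzp]; gcongr

lemma sub_mul_add_rpow_le {p a b : ℝ} (hp1 : 1 ≤ p) (hp2 : p ≤ 2) (hb : 0 ≤ b)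
    (hba : b ≤ a) : (a - b) * (a + b) ^ (p - 1) ≤ a ^ p - b ^ p := by
  rcases hb.trans hba |>.eq_or_lt with rfl | ha
  · obtain rfl : b = 0 := le_antisymm hba hb
    simp
  obtain ⟨z, hz0, hz1, rfl⟩ : ∃ z, 0 ≤ z ∧ z ≤ 1 ∧ b = a * z :=
    ⟨b / a, by positivity, div_le_one_of_le₀ hba ha.le, by field_simp⟩
  calc (a - a * z) * (a + a * z) ^ (p - 1)
        = a ^ p * ((1 - z) * (1 + z) ^ (p - 1)) := by
        rw [show a + a * z = a * (1 + z) by ring, mul_rpow ha.le (by linarith),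
          rpow_sub_one ha.ne']
        field_simp
    _ ≤ a ^ p * (1 - z ^ p) := by
        gcongr
        exact one_sub_mul_one_add_rpow_le hp1 hp2 hz0 hz1
    _ = a ^ p - (a * z) ^ p := by rw [mul_rpow ha.le hz0]; ring

lemma monotoneOn_rpow_add_inv_rpow_sub {p : ℝ} (hp1 : 1 ≤ p) (hp2 : p ≤ 2) :
    MonotoneOn (fun t : ℝ => t ^ p + t⁻¹ ^ p - (t + t⁻¹) ^ p) (Ici 1) := by
  have hderiv : ∀ t : ℝ, 0 < t → HasDerivAt (fun t : ℝ => t ^ p + t⁻¹ ^ p - (t + t⁻¹) ^ p)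
      (p * t⁻¹ * (t ^ p - t⁻¹ ^ p - (t - t⁻¹) * (t + t⁻¹) ^ (p - 1))) t := by
    intro t ht
    have hpow := hasDerivAt_rpow_const (p := p) (Or.inl ht.ne')
    have hinv := (hasDerivAt_inv ht.ne').rpow_const (p := p) (Or.inl (inv_pos.2 ht).ne')
    have hsum := ((hasDerivAt_id' t).add (hasDerivAt_inv ht.ne')).rpow_const (p := p)
      (Or.inl (by positivity : t + t⁻¹ ≠ 0))
    refine ((hpow.add hinv).sub hsum).congr_deriv ?_
    simp only [Pi.add_apply]
    rw [rpow_sub_one ht.ne', rpow_sub_one (inv_pos.2 ht).ne']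
    generalize (t + t⁻¹) ^ (p - 1) = A
    field_simp
    ring
  refine monotoneOn_of_hasDerivWithinAt_nonneg (convex_Ici 1)
    (fun t ht => (hderiv t (zero_lt_one.trans_le ht)).continuousAt.continuousWithinAt)
    (fun t ht => (hderiv t ?_).hasDerivWithinAt) ?_
  · rw [interior_Ici] at ht
    exact zero_lt_one.trans ht
  rw [interior_Ici]
  intro t (ht : 1 < t)
  have ht0 : 0 < t := zero_lt_one.trans ht
  have key := sub_mul_add_rpow_le hp1 hp2 (inv_pos.2 ht0).le
    ((inv_le_one_of_one_le₀ ht.le).trans ht.le)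
  have : 0 ≤ t ^ p - t⁻¹ ^ p - (t - t⁻¹) * (t + t⁻¹) ^ (p - 1) := by linarith
  positivity

lemma add_inv_rpow_le {p B : ℝ} (hp1 : 1 ≤ p) (hp2 : p ≤ 2) (hB : 0 < B) :
    (B + B⁻¹) ^ p ≤ B ^ p + B⁻¹ ^ p + 2 ^ p - 2 := by
  wlog hB1 : 1 ≤ B generalizing B
  · have := this (inv_pos.2 hB) (one_le_inv₀ hB |>.2 (by linarith))
    rwa [inv_inv, add_comm B⁻¹, add_comm (B⁻¹ ^ p)] at this
  have := monotoneOn_rpow_add_inv_rpow_sub hp1 hp2 self_mem_Ici hB1 hB1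
  norm_num at this
  linarith

lemma sq_add_sq_rpow_le {p a b : ℝ} (hp1 : 1 ≤ p) (hp2 : p ≤ 2) (ha : 0 ≤ a) (hb : 0 ≤ b) :
    (a ^ 2 + b ^ 2) ^ p ≤ (a ^ 2) ^ p + (b ^ 2) ^ p + (2 ^ p - 2) * (a * b) ^ p := by
  have hp0 : p ≠ 0 := by positivity
  rcases ha.eq_or_lt with rfl | ha
  · simp [zero_rpow hp0]
  rcases hb.eq_or_lt with rfl | hb
  · simp [zero_rpow hp0]
  have hscale : ∀ u, 0 ≤ u → (a * b) ^ p * u ^ p = (a * b * u) ^ p :=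
    fun u hu => (mul_rpow (by positivity) hu).symm
  calc (a ^ 2 + b ^ 2) ^ p = (a * b) ^ p * (a / b + (a / b)⁻¹) ^ p := by
        rw [hscale _ (by positivity)]
        congr 1
        field_simp
    _ ≤ (a * b) ^ p * ((a / b) ^ p + (a / b)⁻¹ ^ p + 2 ^ p - 2) := by
        gcongr
        exact add_inv_rpow_le hp1 hp2 (by positivity)
    _ = (a ^ 2) ^ p + (b ^ 2) ^ p + (2 ^ p - 2) * (a * b) ^ p := by
        rw [mul_sub, mul_add, mul_add, hscale _ (by positivity), hscale _ (by positivity),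
          show a * b * (a / b) = a ^ 2 by field_simp,
          show a * b * (a / b)⁻¹ = b ^ 2 by field_simp]
        ring

theorem stmt_3 (α x y : ℝ) (hα1 : 1 / 2 ≤ α) (hα2 : α ≤ 1) (hx : 0 ≤ x) (hy : 0 ≤ y) :
    (x + y) ^ (2 * α) - (x ^ α - y ^ α) ^ 2 ≤ (4 * x * y) ^ α := by
  have key := sq_add_sq_rpow_le (p := 2 * α) (by linarith) (by linarith) (sqrt_nonneg x)
    (sqrt_nonneg y)
  have hsq : ∀ u : ℝ, 0 ≤ u → u ^ (2 * α) = (u ^ α) ^ 2 := fun u hu => by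
    rw [← rpow_mul_natCast hu, Nat.cast_ofNat, mul_comm]
  have hsqrt : (√x * √y) ^ (2 * α) = (x * y) ^ α := by
    rw [← sqrt_mul hx, rpow_mul (sqrt_nonneg _), rpow_two, sq_sqrt (by positivity)]
  have hfour : (4 * x * y) ^ α = 2 ^ (2 * α) * (x * y) ^ α := by
    rw [mul_assoc, mul_rpow (by norm_num) (by positivity), rpow_mul (by norm_num)]
    norm_num
  rw [sq_sqrt hx, sq_sqrt hy, hsqrt, hsq x hx, hsq y hy] at key
  have hexpand : (x ^ α - y ^ α) ^ 2 = (x ^ α) ^ 2 + (y ^ α) ^ 2 - 2 * (x * y) ^ α := by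
    rw [mul_rpow hx hy]
    ring
  rw [hfour, hexpand]
  linarith
end

section
/- For all s ∈ (0, 1/2), it holds (1−s)/s ≤ log(s)/log(1−s). -/
/-!
Clearing the negative denominators turns the inequality into `s log s ≤ (1 - s) log (1 - s)`.
Below `1/e` this follows from `x log x ≥ x - 1` at `1 - s` together with `log s ≤ -1`; above `1/e`
it is the monotonicity of `x log x` on `[1/e, ∞)`, since `s ≤ 1 - s`.
-/

open Real

theorem mul_log_le_mul_log_one_sub {s : ℝ} (hs0 : 0 ≤ s) (hs : s ≤ 1 / 2) :
    s * log s ≤ (1 - s) * log (1 - s) := by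
  rcases hs0.eq_or_lt with rfl | hpos
  · simp
  rcases le_or_gt s (exp (-1)) with hsmall | hlarge
  · have hlog : log s ≤ -1 := by simpa using log_le_log hpos hsmall
    calc s * log s ≤ s * (-1) := mul_le_mul_of_nonneg_left hlog hs0
      _ = (1 - s) - 1 := by ring
      _ ≤ (1 - s) * log (1 - s) := self_sub_one_le_mul_log (by linarith)
  · exact mul_log_strictMonoOn.monotoneOn hlarge.le (show exp (-1) ≤ 1 - s by linarith)
      (by linarith)

theorem stmt_4 (s : ℝ) (hs0 : 0 < s) (hs1 : s < 1 / 2) :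
    (1 - s) / s ≤ Real.log s / Real.log (1 - s) := by
  have hlog : log (1 - s) < 0 := log_neg (by linarith) (by linarith)
  rw [le_div_iff_of_neg hlog, div_mul_eq_mul_div, le_div_iff₀ hs0, mul_comm]
  exact mul_log_le_mul_log_one_sub hs0.le hs1.le
end

section
/- Let a ≥ b > 0 and define f(x) = (a^x − b^x)/(a+b)^x for x ∈ [1,2]. Then f is concave on [1,2]; in particular, for all x ∈ [1,2], f(x) ≥ f(1) = f(2) = (a−b)/(a+b). -/
/-!
Writing `p = a / (a + b)` and `q = b / (a + b)`, the function is `x ↦ p ^ x - q ^ x` with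
`q ≤ p` and `p + q = 1`. Its second derivative `p ^ x (log p)² - q ^ x (log q)²` equals
`p ^ (x - 2) (p log p)² - q ^ (x - 2) (q log q)²`, which is nonpositive for `x ≤ 2` because
`p ^ (x - 2) ≤ q ^ (x - 2)` and `-p log p ≤ -q log q`. A concave function on `[1, 2]` lies above
the smaller endpoint value, and both endpoint values equal `(a - b) / (a + b)`.
-/

open Real Set

lemma negMulLog_le_negMulLog_of_add_eq_one {p q : ℝ} (hq : 0 < q) (hqp : q ≤ p)
    (hpq : p + q = 1) : negMulLog p ≤ negMulLog q := by
  have hp : 0 < p := hq.trans_le hqp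
  -- `q log q - p log p = q log (q / p) + (p - q) log (1 / p)`; bound both logarithms by `t - 1`.
  have hqp_log : log (q / p) ≤ q / p - 1 := log_le_sub_one_of_pos (div_pos hq hp)
  have hinv_log : log p⁻¹ ≤ p⁻¹ - 1 := log_le_sub_one_of_pos (inv_pos.mpr hp)
  rw [log_div hq.ne' hp.ne'] at hqp_log
  rw [log_inv] at hinv_log
  have hq_eq : q = 1 - p := by linarith
  have hbound : q * (log q - log p) + (p - q) * (-log p) ≤ q * (q / p - 1) + (p - q) * (p⁻¹ - 1) :=
    add_le_add (mul_le_mul_of_nonneg_left hqp_log hq.le)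
      (mul_le_mul_of_nonneg_left hinv_log (sub_nonneg.mpr hqp))
  have hrhs : q * (q / p - 1) + (p - q) * (p⁻¹ - 1) = 0 := by
    rw [hq_eq]; field_simp; ring
  simp only [negMulLog]
  linarith

lemma rpow_mul_log_sq_le {p q x : ℝ} (hq : 0 < q) (hqp : q ≤ p) (hpq : p + q = 1) (hx : x ≤ 2) :
    p ^ x * log p ^ 2 ≤ q ^ x * log q ^ 2 := by
  have hp : 0 < p := hq.trans_le hqp
  have hsplit : ∀ t : ℝ, 0 < t → t ^ x * log t ^ 2 = t ^ (x - 2) * negMulLog t ^ 2 := by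
    intro t ht
    rw [rpow_sub ht, rpow_two, negMulLog]
    field_simp
  rw [hsplit p hp, hsplit q hq]
  have hentropy : negMulLog p ^ 2 ≤ negMulLog q ^ 2 :=
    pow_le_pow_left₀ (negMulLog_nonneg hp.le (by linarith))
      (negMulLog_le_negMulLog_of_add_eq_one hq hqp hpq) 2
  exact mul_le_mul (rpow_le_rpow_of_nonpos hq hqp (by linarith)) hentropy (sq_nonneg _)
    (rpow_nonneg hq.le _)

lemma concaveOn_rpow_sub_rpow {p q : ℝ} (hq : 0 < q) (hqp : q ≤ p) (hpq : p + q = 1) :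
    ConcaveOn ℝ (Iic (2 : ℝ)) (fun x => p ^ x - q ^ x) := by
  have hp : 0 < p := hq.trans_le hqp
  have hderiv : ∀ x : ℝ, HasDerivAt (fun x => p ^ x - q ^ x) (p ^ x * log p - q ^ x * log q) x :=
    fun x => (hasStrictDerivAt_const_rpow hp x).hasDerivAt.sub
      (hasStrictDerivAt_const_rpow hq x).hasDerivAt
  have hderiv2 : ∀ x : ℝ, HasDerivAt (fun x => p ^ x * log p - q ^ x * log q)
      (p ^ x * log p * log p - q ^ x * log q * log q) x :=
    fun x => ((hasStrictDerivAt_const_rpow hp x).hasDerivAt.mul_const _).sub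
      ((hasStrictDerivAt_const_rpow hq x).hasDerivAt.mul_const _)
  refine concaveOn_of_hasDerivWithinAt2_nonpos (convex_Iic 2)
    (fun x _ => (hderiv x).continuousAt.continuousWithinAt)
    (fun x _ => (hderiv x).hasDerivWithinAt) (fun x _ => (hderiv2 x).hasDerivWithinAt) ?_
  intro x hx
  rw [interior_Iic] at hx
  rw [mul_assoc, mul_assoc, ← sq, ← sq, sub_nonpos]
  exact rpow_mul_log_sq_le hq hqp hpq hx.le

theorem stmt_5 (a b : ℝ) (hb : 0 < b) (hab : b ≤ a) :
    ConcaveOn ℝ (Set.Icc (1 : ℝ) 2) (fun x => (a ^ x - b ^ x) / (a + b) ^ x) ∧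
    (∀ x ∈ Set.Icc (1 : ℝ) 2, (a - b) / (a + b) ≤ (a ^ x - b ^ x) / (a + b) ^ x) ∧
    (a ^ (1 : ℝ) - b ^ (1 : ℝ)) / (a + b) ^ (1 : ℝ) = (a - b) / (a + b) ∧
    (a ^ (2 : ℝ) - b ^ (2 : ℝ)) / (a + b) ^ (2 : ℝ) = (a - b) / (a + b) := by
  have ha : 0 < a := hb.trans_le hab
  have hab_pos : 0 < a + b := by linarith
  have hf : (fun x : ℝ => (a ^ x - b ^ x) / (a + b) ^ x)
      = fun x => (a / (a + b)) ^ x - (b / (a + b)) ^ x := by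
    funext x
    rw [div_rpow ha.le hab_pos.le, div_rpow hb.le hab_pos.le, sub_div]
  have hconc : ConcaveOn ℝ (Icc (1 : ℝ) 2) (fun x => (a ^ x - b ^ x) / (a + b) ^ x) := by
    rw [hf]
    refine (concaveOn_rpow_sub_rpow (div_pos hb hab_pos)
      (div_le_div_of_nonneg_right hab hab_pos.le) ?_).subset Icc_subset_Iic_self (convex_Icc 1 2)
    field_simp
  have hf1 : (a ^ (1 : ℝ) - b ^ (1 : ℝ)) / (a + b) ^ (1 : ℝ) = (a - b) / (a + b) := by
    simp only [rpow_one]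
  have hf2 : (a ^ (2 : ℝ) - b ^ (2 : ℝ)) / (a + b) ^ (2 : ℝ) = (a - b) / (a + b) := by
    rw [rpow_two, rpow_two, rpow_two]
    field_simp
    ring
  refine ⟨hconc, fun x hx => ?_, hf1, hf2⟩
  have := hconc.min_le_of_mem_Icc (left_mem_Icc.mpr one_le_two) (right_mem_Icc.mpr one_le_two) hx
  rwa [hf1, hf2, min_self] at this
end

section
/- Let a, b, c, d be nonnegative reals with a ≥ b, d ≥ c, and let α ∈ [0,1]. Then a^α − b^α − c^α + d^α ≤ 2^(1−α) · (a − b − c + d)^α. -/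
/-!
Write `a = (a - b) + b` and `d = (d - c) + c`. Subadditivity of `x ↦ x ^ α` on `[0, ∞)` bounds
`a ^ α - b ^ α` by `(a - b) ^ α` and `d ^ α - c ^ α` by `(d - c) ^ α`, and concavity at the
midpoint gives `u ^ α + v ^ α ≤ 2 ^ (1 - α) * (u + v) ^ α`.
-/

namespace Real

lemma rpow_add_rpow_le_two_rpow_one_sub_mul {u v α : ℝ} (hu : 0 ≤ u) (hv : 0 ≤ v)
    (hα0 : 0 ≤ α) (hα1 : α ≤ 1) :
    u ^ α + v ^ α ≤ 2 ^ (1 - α) * (u + v) ^ α := by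
  have hmid : (1 / 2 : ℝ) * u ^ α + 1 / 2 * v ^ α ≤ (1 / 2 * u + 1 / 2 * v) ^ α :=
    (concaveOn_rpow hα0 hα1).2 hu hv (by norm_num) (by norm_num) (by norm_num)
  have htwo : (2 : ℝ) ^ (1 - α) = 2 * (1 / 2) ^ α := by
    rw [rpow_sub two_pos, rpow_one, div_rpow zero_le_one zero_le_two, one_rpow, mul_one_div]
  rw [← mul_add, ← mul_add, mul_rpow (by norm_num) (add_nonneg hu hv)] at hmid
  rw [htwo]
  linarith

lemma rpow_sub_rpow_le_rpow_sub {a b α : ℝ} (hb : 0 ≤ b) (hba : b ≤ a) (hα0 : 0 ≤ α)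
    (hα1 : α ≤ 1) : a ^ α - b ^ α ≤ (a - b) ^ α := by
  have := rpow_add_le_add_rpow (sub_nonneg.2 hba) hb hα0 hα1
  rw [sub_add_cancel] at this
  linarith

end Real

theorem stmt_6 (a b c d α : ℝ) (hb : 0 ≤ b) (hc : 0 ≤ c) (hba : b ≤ a) (hcd : c ≤ d)
    (hα0 : 0 ≤ α) (hα1 : α ≤ 1) :
    a ^ α - b ^ α - c ^ α + d ^ α ≤ 2 ^ (1 - α) * (a - b - c + d) ^ α := by
  calc a ^ α - b ^ α - c ^ α + d ^ α = (a ^ α - b ^ α) + (d ^ α - c ^ α) := by ring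
    _ ≤ (a - b) ^ α + (d - c) ^ α :=
      add_le_add (Real.rpow_sub_rpow_le_rpow_sub hb hba hα0 hα1)
        (Real.rpow_sub_rpow_le_rpow_sub hc hcd hα0 hα1)
    _ ≤ 2 ^ (1 - α) * ((a - b) + (d - c)) ^ α :=
      Real.rpow_add_rpow_le_two_rpow_one_sub_mul (sub_nonneg.2 hba) (sub_nonneg.2 hcd) hα0 hα1
    _ = 2 ^ (1 - α) * (a - b - c + d) ^ α := by ring_nf
end

section
/- Let a ≥ b ≥ c ≥ d ≥ 0 with a + d ≥ b + c, and let α ∈ [0,1]. Then a^α − b^α − c^α + d^α ≤ (a − b − c + d)^α. -/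
/-!
Concavity of `t ↦ t ^ α` makes its increments `f (x + t) - f x` antitone in `x`. With
`e = a - b - c + d`, comparing the increment by `a - b` at `b` with the one at `d ≤ b`
gives `a ^ α - b ^ α ≤ (c + e) ^ α - d ^ α`, and subadditivity
`(c + e) ^ α ≤ c ^ α + e ^ α` finishes.
-/

open Set

section IncreasingDifferences

variable {𝕜 β : Type*} [Field 𝕜] [LinearOrder 𝕜] [IsStrictOrderedRing 𝕜]
  [AddCommGroup β] [PartialOrder β] [IsOrderedAddMonoid β] [Module 𝕜 β]
  {s : Set 𝕜} {f : 𝕜 → β} {x y t : 𝕜}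

theorem ConcaveOn.map_add_add_map_le (hf : ConcaveOn 𝕜 s f) (hx : x ∈ s) (hyt : y + t ∈ s)
    (hxy : x ≤ y) (ht : 0 ≤ t) : f (y + t) + f x ≤ f (x + t) + f y := by
  obtain hD | hD := (by linarith : (0 : 𝕜) ≤ y - x + t).eq_or_lt
  · obtain rfl : t = 0 := by linarith
    obtain rfl : y = x := by linarith
    rfl
  -- `x + t` and `y` are convex combinations of `x` and `y + t` with swapped weights.
  set D := y - x + t with hD_def
  have hyx : 0 ≤ (y - x) / D := div_nonneg (sub_nonneg.2 hxy) hD.le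
  have htD : 0 ≤ t / D := div_nonneg ht hD.le
  have hsum : (y - x) / D + t / D = 1 := by rw [← add_div, hD_def, div_self hD.ne']
  have h₁ := hf.2 hx hyt hyx htD hsum
  have h₂ := hf.2 hx hyt htD hyx (by rwa [add_comm])
  rw [smul_eq_mul, smul_eq_mul, show (y - x) / D * x + t / D * (y + t) = x + t by
    field_simp; ring] at h₁
  rw [smul_eq_mul, smul_eq_mul, show t / D * x + (y - x) / D * (y + t) = y by
    field_simp; ring] at h₂
  calc f (y + t) + f x
      = ((y - x) / D + t / D) • f x + ((y - x) / D + t / D) • f (y + t) := by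
        rw [hsum, one_smul, one_smul, add_comm]
    _ = (((y - x) / D) • f x + (t / D) • f (y + t))
          + ((t / D) • f x + ((y - x) / D) • f (y + t)) := by
        module
    _ ≤ f (x + t) + f y := add_le_add h₁ h₂

end IncreasingDifferences

theorem stmt_7 (a b c d α : ℝ) (hd : 0 ≤ d) (hdc : d ≤ c) (hcb : c ≤ b) (hba : b ≤ a)
    (hsum : b + c ≤ a + d) (hα0 : 0 ≤ α) (hα1 : α ≤ 1) :
    a ^ α - b ^ α - c ^ α + d ^ α ≤ (a - b - c + d) ^ α := by
  set e := a - b - c + d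
  have hincr : a ^ α + d ^ α ≤ (c + e) ^ α + b ^ α := by
    have h := (Real.concaveOn_rpow hα0 hα1).map_add_add_map_le (x := d) (y := b) (t := a - b)
      hd (by simp only [mem_Ici]; linarith) (hdc.trans hcb) (sub_nonneg.2 hba)
    rwa [add_sub_cancel, show d + (a - b) = c + e by ring] at h
  have hsub := Real.rpow_add_le_add_rpow (hd.trans hdc) (by linarith : 0 ≤ e) hα0 hα1
  linarith
end

section
/- Let A, B be reals, a, b, c, r ≥ 0, s, t > 0. Assume (t ≥ s if and only if b ≥ a), |A| ≤ r·a, |B| ≤ r·b, and |A − B| ≤ r·c. Then |A/s − B/t| ≤ r·(min(s,t)·c + |s−t|·min(a,b))/(s·t). -/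
/-! Over the common denominator `s * t`, when `s ≤ t` one writes `t A - s B = s (A - B) + (t - s) A`
and bounds both terms; the case `t < s` is the same with the roles of `(A, a, s)` and `(B, b, t)`
exchanged, the ordering hypothesis supplying `a ≤ b` resp. `b ≤ a`. -/

section

variable {K : Type*} [Field K] [LinearOrder K] [IsStrictOrderedRing K]

lemma abs_mul_sub_mul_le_of_le {s t : K} (A B : K) (hs : 0 ≤ s) (hst : s ≤ t) :
    |A * t - s * B| ≤ s * |A - B| + (t - s) * |A| :=
  calc |A * t - s * B| = |s * (A - B) + (t - s) * A| := by ring_nf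
    _ ≤ |s * (A - B)| + |(t - s) * A| := abs_add_le _ _
    _ = s * |A - B| + (t - s) * |A| := by
      rw [abs_mul, abs_mul, abs_of_nonneg hs, abs_of_nonneg (sub_nonneg.2 hst)]

lemma abs_div_sub_div_le_of_le {A B a b c r s t : K} (hs : 0 < s) (hst : s ≤ t) (hab : a ≤ b)
    (hA : |A| ≤ r * a) (hAB : |A - B| ≤ r * c) :
    |A / s - B / t| ≤ r * (min s t * c + |s - t| * min a b) / (s * t) := by
  have ht : 0 < t := hs.trans_le hst
  rw [min_eq_left hst, min_eq_left hab, abs_of_nonpos (sub_nonpos.2 hst),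
    div_sub_div _ _ hs.ne' ht.ne', abs_div, abs_of_pos (mul_pos hs ht)]
  gcongr ?_ / _
  calc |A * t - s * B| ≤ s * |A - B| + (t - s) * |A| := abs_mul_sub_mul_le_of_le A B hs.le hst
    _ ≤ s * (r * c) + (t - s) * (r * a) := by gcongr
    _ = r * (s * c + -(s - t) * a) := by ring

end

theorem stmt_8_general (A B a b c r s t : ℝ)
    (hs : 0 < s) (ht : 0 < t) (hiff : s ≤ t ↔ a ≤ b)
    (hA : |A| ≤ r * a) (hB : |B| ≤ r * b) (hAB : |A - B| ≤ r * c) :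
    |A / s - B / t| ≤ r * (min s t * c + |s - t| * min a b) / (s * t) := by
  rcases le_or_gt s t with hst | hts
  · exact abs_div_sub_div_le_of_le hs hst (hiff.1 hst) hA hAB
  · have hba : b ≤ a := (not_le.1 (mt hiff.2 hts.not_ge)).le
    have := abs_div_sub_div_le_of_le ht hts.le hba hB (abs_sub_comm A B ▸ hAB)
    rwa [abs_sub_comm, min_comm, abs_sub_comm t, min_comm b, mul_comm t] at this

theorem stmt_8 (A B a b c r s t : ℝ) (ha : 0 ≤ a) (hb : 0 ≤ b) (hc : 0 ≤ c) (hr : 0 ≤ r)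
    (hs : 0 < s) (ht : 0 < t) (hiff : s ≤ t ↔ a ≤ b)
    (hA : |A| ≤ r * a) (hB : |B| ≤ r * b) (hAB : |A - B| ≤ r * c) :
    |A / s - B / t| ≤ r * (min s t * c + |s - t| * min a b) / (s * t) :=
  stmt_8_general A B a b c r s t hs ht hiff hA hB hAB
end

section
/- Let a, b, c > 0 and β ∈ [0,1]. Assume a ≤ b, b ≤ a + c, and c ≤ a + b. Then (c·a^β + (b^β − a^β)·a)/(a^β · b^β) ≤ 2^β · c^(1−β). -/
/-!
After rewriting the left side as `(c - a) / b ^ β + a ^ (1 - β)`, split on the sign of `c - a`.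
If `a < c`, then `c - a ≤ b` gives `(c - a) / b ^ β ≤ (c - a) ^ (1 - β)`, and concavity of
`t ↦ t ^ (1 - β)` bounds `(c - a) ^ (1 - β) + a ^ (1 - β)` by `2 ^ β * c ^ (1 - β)`.
If `c ≤ a`, the first term is nonpositive, so it only grows when `b` is raised to `a + c`;
weighted AM-GM gives `a ^ (1 - β) * (a + c) ^ β ≤ a + β * c`, and the resulting bound
`(1 + β) * c / (2 * c) ^ β` is at most `2 ^ β * c ^ (1 - β)` because `1 + β ≤ 4 ^ β`.
-/

open Real

lemma rpow_add_rpow_le_two_rpow_mul_add_rpow {x y p : ℝ} (hx : 0 ≤ x) (hy : 0 ≤ y)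
    (hp₀ : 0 ≤ p) (hp₁ : p ≤ 1) : x ^ p + y ^ p ≤ 2 ^ (1 - p) * (x + y) ^ p := by
  have hmid := (concaveOn_rpow hp₀ hp₁).2 (Set.mem_Ici.2 hx) (Set.mem_Ici.2 hy)
    (by norm_num : (0 : ℝ) ≤ 1 / 2) (by norm_num : (0 : ℝ) ≤ 1 / 2) (by norm_num)
  simp only [smul_eq_mul, ← mul_add, mul_rpow (by norm_num : (0 : ℝ) ≤ 1 / 2) (add_nonneg hx hy),
    div_rpow zero_le_one zero_le_two, one_rpow] at hmid
  have h2p : (0 : ℝ) < 2 ^ p := by positivity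
  rw [rpow_sub zero_lt_two, rpow_one]
  field_simp at hmid ⊢
  linarith

lemma one_add_le_four_rpow {β : ℝ} (hβ : 0 ≤ β) : 1 + β ≤ (4 : ℝ) ^ β := by
  have hlog : 1 ≤ log 4 := by
    rw [le_log_iff_exp_le (by norm_num)]
    exact exp_one_lt_d9.le.trans (by norm_num)
  calc 1 + β ≤ log 4 * β + 1 := by nlinarith
    _ ≤ exp (log 4 * β) := add_one_le_exp _
    _ = 4 ^ β := (rpow_def_of_pos (by norm_num) β).symm

lemma div_rpow_mul_rpow_eq_sub_div_rpow_add_rpow {a b c β : ℝ} (ha : 0 < a) (hb : 0 < b) :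
    (c * a ^ β + (b ^ β - a ^ β) * a) / (a ^ β * b ^ β) = (c - a) / b ^ β + a ^ (1 - β) := by
  have : 0 < a ^ β := by positivity
  have : 0 < b ^ β := by positivity
  rw [rpow_sub ha, rpow_one]
  field_simp
  ring

lemma sub_div_rpow_add_rpow_le_of_lt {a b c β : ℝ} (ha : 0 < a) (hac : a < c) (hcab : c ≤ a + b)
    (hβ₀ : 0 ≤ β) (hβ₁ : β ≤ 1) : (c - a) / b ^ β + a ^ (1 - β) ≤ 2 ^ β * c ^ (1 - β) := by
  have hca : 0 < c - a := sub_pos.2 hac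
  calc (c - a) / b ^ β + a ^ (1 - β)
      ≤ (c - a) / (c - a) ^ β + a ^ (1 - β) := by
        gcongr
        linarith
    _ = (c - a) ^ (1 - β) + a ^ (1 - β) := by rw [rpow_sub hca, rpow_one]
    _ ≤ 2 ^ (1 - (1 - β)) * (c - a + a) ^ (1 - β) :=
        rpow_add_rpow_le_two_rpow_mul_add_rpow hca.le ha.le (by linarith) (by linarith)
    _ = 2 ^ β * c ^ (1 - β) := by ring_nf

lemma sub_div_rpow_add_rpow_le_of_le {a b c β : ℝ} (hb : 0 < b) (hc : 0 < c) (hca : c ≤ a)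
    (hbac : b ≤ a + c) (hβ₀ : 0 ≤ β) (hβ₁ : β ≤ 1) :
    (c - a) / b ^ β + a ^ (1 - β) ≤ 2 ^ β * c ^ (1 - β) := by
  have ha : 0 < a := hc.trans_le hca
  have hac : 0 < a + c := by positivity
  calc (c - a) / b ^ β + a ^ (1 - β)
      ≤ (c - a) / (a + c) ^ β + a ^ (1 - β) := by
        rw [← neg_sub a c, neg_div, neg_div]
        gcongr
    _ = (c - a + a ^ (1 - β) * (a + c) ^ β) / (a + c) ^ β := by field_simp
    _ ≤ (1 + β) * c / (a + c) ^ β := by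
        have amgm := geom_mean_le_arith_mean2_weighted (by linarith) hβ₀ ha.le hac.le
          (sub_add_cancel 1 β)
        gcongr
        linarith
    _ ≤ (1 + β) * c / (2 * c) ^ β := by
        gcongr
        linarith
    _ = (1 + β) / 2 ^ β * c ^ (1 - β) := by
        rw [mul_rpow zero_le_two hc.le, rpow_sub hc, rpow_one]
        field_simp
    _ ≤ 2 ^ β * c ^ (1 - β) := by
        have h4 : (4 : ℝ) ^ β = 2 ^ β * 2 ^ β := by
          rw [← mul_rpow zero_le_two zero_le_two]
          norm_num
        gcongr
        rw [div_le_iff₀ (by positivity), ← h4]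
        exact one_add_le_four_rpow hβ₀

theorem stmt_9_general (a b c β : ℝ) (ha : 0 < a) (hb : 0 < b) (hc : 0 < c)
    (hβ0 : 0 ≤ β) (hβ1 : β ≤ 1) (hbac : b ≤ a + c) (hcab : c ≤ a + b) :
    (c * a ^ β + (b ^ β - a ^ β) * a) / (a ^ β * b ^ β) ≤ 2 ^ β * c ^ (1 - β) := by
  rw [div_rpow_mul_rpow_eq_sub_div_rpow_add_rpow ha hb]
  rcases lt_or_ge a c with hac | hca
  · exact sub_div_rpow_add_rpow_le_of_lt ha hac hcab hβ0 hβ1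
  · exact sub_div_rpow_add_rpow_le_of_le hb hc hca hbac hβ0 hβ1

theorem stmt_9 (a b c β : ℝ) (ha : 0 < a) (hb : 0 < b) (hc : 0 < c)
    (hβ0 : 0 ≤ β) (hβ1 : β ≤ 1) (hab : a ≤ b) (hbac : b ≤ a + c) (hcab : c ≤ a + b) :
    (c * a ^ β + (b ^ β - a ^ β) * a) / (a ^ β * b ^ β) ≤ 2 ^ β * c ^ (1 - β) :=
  stmt_9_general a b c β ha hb hc hβ0 hβ1 hbac hcab
end

section
/- Let α ∈ [1/2, 1], b ≥ 0, and a, c ∈ ℝ. Then |a|^(2α) − |c|^(2α) − |a−b|^(2α) + |c−b|^(2α) ≤ 2^(1−2α)·((a−c+b)^(2α) − |a−c−b|^(2α)) if a > c, and |a|^(2α) − |c|^(2α) − |a−b|^(2α) + |c−b|^(2α) ≤ 0 if a ≤ c. -/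
/-
Put `p = 2α ∈ [1, 2]`. If `a ≤ c`, the points `a - b ≤ a, c - b ≤ c` satisfy
`a + (c - b) = (a - b) + c`, and convexity of `|x| ^ p` bounds `|a| ^ p + |c - b| ^ p` by
`|a - b| ^ p + |c| ^ p`.

If `c < a`, write `a, c - b = s ± t` and `a - b, c = s ± m` with `s = (a + c - b) / 2`,
`t = (a - c + b) / 2`, `m = (a - c - b) / 2`, so that `|m| ≤ t` and the right-hand side is
`2 t ^ p - 2 |m| ^ p`. The claim is then that `t ↦ |s + t| ^ p + |s - t| ^ p - 2 |t| ^ p` is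
antitone on `[0, ∞)`. Its derivative is `p (φ (s + t) - φ (s - t) - 2 φ t)` with
`φ x = sign x |x| ^ (p - 1)`, which is nonpositive by concavity (`s ≤ t`) or subadditivity
(`t ≤ s`) of `x ^ (p - 1)` on `[0, ∞)`.
-/

open Set

theorem ConvexOn.add_le_add_of_add_eq {s : Set ℝ} {f : ℝ → ℝ} (hf : ConvexOn ℝ s f)
    {x₁ x₂ x₃ x₄ : ℝ} (hx₁ : x₁ ∈ s) (hx₄ : x₄ ∈ s) (h₁₂ : x₁ ≤ x₂) (h₁₃ : x₁ ≤ x₃)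
    (hsum : x₂ + x₃ = x₁ + x₄) : f x₂ + f x₃ ≤ f x₁ + f x₄ := by
  rcases (show x₁ ≤ x₄ by linarith).eq_or_lt with rfl | h₁₄
  · obtain rfl : x₂ = x₁ := by linarith
    obtain rfl : x₃ = x₂ := by linarith
    rfl
  have hd : x₄ - x₁ ≠ 0 := by linarith
  set l := (x₄ - x₂) / (x₄ - x₁)
  set m := (x₂ - x₁) / (x₄ - x₁)
  have hlm : l + m = 1 := by rw [← add_div, div_eq_one_iff_eq hd]; ring
  have h₂ := hf.2 hx₁ hx₄ (div_nonneg (by linarith) (by linarith) : 0 ≤ l)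
    (div_nonneg (by linarith) (by linarith) : 0 ≤ m) hlm
  have h₃ := hf.2 hx₁ hx₄ (div_nonneg (by linarith) (by linarith) : 0 ≤ m)
    (div_nonneg (by linarith) (by linarith) : 0 ≤ l) (by linarith)
  have e₂ : l • x₁ + m • x₄ = x₂ := by simp only [l, m, smul_eq_mul]; field_simp; ring
  have e₃ : m • x₁ + l • x₄ = x₃ := by
    simp only [l, m, smul_eq_mul]; field_simp; linear_combination (x₁ - x₄) * hsum
  rw [e₂] at h₂
  rw [e₃] at h₃
  simp only [smul_eq_mul] at h₂ h₃
  linear_combination h₂ + h₃ + (f x₁ + f x₄) * hlm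

theorem convexOn_abs_rpow {p : ℝ} (hp : 1 ≤ p) : ConvexOn ℝ univ fun x : ℝ ↦ |x| ^ p := by
  have hsub : (norm : ℝ → ℝ) '' univ ⊆ Ici (0 : ℝ) := image_subset_iff.2 fun x _ ↦ norm_nonneg x
  have hconv : Convex ℝ ((norm : ℝ → ℝ) '' univ) := by
    rw [image_univ, range_norm]; exact convex_Ici 0
  exact ((convexOn_rpow hp).subset hsub hconv).comp convexOn_univ_norm
    ((Real.monotoneOn_rpow_Ici_of_exponent_nonneg (by linarith)).mono hsub)

section Concave

variable {q s t : ℝ}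

theorem rpow_add_add_rpow_sub_le_two_mul_rpow (hq₀ : 0 ≤ q) (hq₁ : q ≤ 1) (hs : 0 ≤ s)
    (hst : s ≤ t) : (t + s) ^ q + (t - s) ^ q ≤ 2 * t ^ q := by
  have h := (Real.concaveOn_rpow hq₀ hq₁).2 (mem_Ici.2 (by linarith : 0 ≤ t + s))
    (mem_Ici.2 (by linarith : 0 ≤ t - s)) (by norm_num : (0 : ℝ) ≤ 1 / 2)
    (by norm_num : (0 : ℝ) ≤ 1 / 2) (by norm_num)
  simp only [smul_eq_mul] at h
  rw [show 1 / 2 * (t + s) + 1 / 2 * (t - s) = t by ring] at h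
  linarith

theorem rpow_add_sub_rpow_sub_le_two_mul_rpow (hq₀ : 0 ≤ q) (hq₁ : q ≤ 1) (ht : 0 ≤ t)
    (hts : t ≤ s) : (s + t) ^ q - (s - t) ^ q ≤ 2 * t ^ q := by
  have hsub :=
    Real.rpow_add_le_add_rpow (by linarith : 0 ≤ s - t) (by linarith : 0 ≤ 2 * t) hq₀ hq₁
  have htwo : (2 * t) ^ q ≤ 2 * t ^ q := by
    rw [Real.mul_rpow zero_le_two ht]
    gcongr
    exact Real.rpow_le_self_of_one_le one_le_two hq₁
  rw [show s - t + 2 * t = s + t by ring] at hsub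
  linarith

end Concave

theorem abs_rpow_sub_two_mul_self_of_nonneg {p z : ℝ} (hp : 1 < p) (hz : 0 ≤ z) :
    |z| ^ (p - 2) * z = z ^ (p - 1) := by
  rcases hz.eq_or_lt with rfl | hz
  · rw [mul_zero, Real.zero_rpow (by linarith)]
  · rw [abs_of_pos hz, ← Real.rpow_add_one hz.ne']
    ring_nf

theorem abs_add_rpow_sub_two_mul_sub_le {p s t : ℝ} (hp₁ : 1 < p) (hp₂ : p ≤ 2) (hs : 0 ≤ s)
    (ht : 0 ≤ t) :
    |s + t| ^ (p - 2) * (s + t) - |s - t| ^ (p - 2) * (s - t) ≤ 2 * (|t| ^ (p - 2) * t) := by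
  have hq₀ : 0 ≤ p - 1 := by linarith
  have hq₁ : p - 1 ≤ 1 := by linarith
  rw [abs_rpow_sub_two_mul_self_of_nonneg hp₁ (add_nonneg hs ht),
    abs_rpow_sub_two_mul_self_of_nonneg hp₁ ht]
  rcases le_total s t with hst | hts
  · rw [abs_sub_comm, show s - t = -(t - s) by ring, mul_neg,
      abs_rpow_sub_two_mul_self_of_nonneg hp₁ (sub_nonneg.2 hst), add_comm s t, sub_neg_eq_add]
    exact rpow_add_add_rpow_sub_le_two_mul_rpow hq₀ hq₁ hs hst
  · rw [abs_rpow_sub_two_mul_self_of_nonneg hp₁ (sub_nonneg.2 hts)]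
    exact rpow_add_sub_rpow_sub_le_two_mul_rpow hq₀ hq₁ ht hts

theorem antitoneOn_abs_add_rpow_add_abs_sub_rpow_sub {p : ℝ} (hp₁ : 1 ≤ p) (hp₂ : p ≤ 2)
    (s : ℝ) : AntitoneOn (fun t ↦ |s + t| ^ p + |s - t| ^ p - 2 * |t| ^ p) (Ici 0) := by
  wlog hs : 0 ≤ s generalizing s
  · convert this (-s) (by linarith) using 2 with t
    rw [show -s + t = -(s - t) by ring, show -s - t = -(s + t) by ring, abs_neg, abs_neg,
      add_comm (|s + t| ^ p)]
  rcases hp₁.eq_or_lt with rfl | hp₁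
  -- `|x|` is not differentiable at `0`, so the case `p = 1` is done by hand
  · intro t₁ ht₁ t₂ ht₂ h
    simp only [mem_Ici] at ht₁ ht₂
    simp only [Real.rpow_one, abs_of_nonneg (add_nonneg hs ht₁), abs_of_nonneg (add_nonneg hs ht₂),
      abs_of_nonneg ht₁, abs_of_nonneg ht₂]
    rcases abs_cases (s - t₁) with ⟨h₁, h₁'⟩ | ⟨h₁, h₁'⟩ <;>
      rcases abs_cases (s - t₂) with ⟨h₂, h₂'⟩ | ⟨h₂, h₂'⟩ <;> linarith
  have hderiv (t : ℝ) : HasDerivAt (fun t ↦ |s + t| ^ p + |s - t| ^ p - 2 * |t| ^ p)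
      (p * (|s + t| ^ (p - 2) * (s + t) - |s - t| ^ (p - 2) * (s - t) -
        2 * (|t| ^ (p - 2) * t))) t := by
    have hadd := (hasDerivAt_abs_rpow (s + t) hp₁).comp t ((hasDerivAt_id t).const_add s)
    have hsub := (hasDerivAt_abs_rpow (s - t) hp₁).comp t ((hasDerivAt_id t).const_sub s)
    exact ((hadd.add hsub).sub ((hasDerivAt_abs_rpow t hp₁).const_mul 2)).congr_deriv (by ring)
  refine antitoneOn_of_deriv_nonpos (convex_Ici 0)
    (fun t _ ↦ (hderiv t).continuousAt.continuousWithinAt)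
    (fun t _ ↦ (hderiv t).differentiableAt.differentiableWithinAt) fun t ht ↦ ?_
  rw [interior_Ici, mem_Ioi] at ht
  rw [(hderiv t).deriv]
  exact mul_nonpos_of_nonneg_of_nonpos (by linarith)
    (by linarith [abs_add_rpow_sub_two_mul_sub_le hp₁ hp₂ hs ht.le])

theorem abs_add_rpow_add_abs_sub_rpow_sub_le {p : ℝ} (hp₁ : 1 ≤ p) (hp₂ : p ≤ 2)
    {s m t : ℝ} (hmt : |m| ≤ t) :
    |s + t| ^ p + |s - t| ^ p - 2 * t ^ p ≤ |s + m| ^ p + |s - m| ^ p - 2 * |m| ^ p := by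
  have ht : 0 ≤ t := (abs_nonneg m).trans hmt
  have h := antitoneOn_abs_add_rpow_add_abs_sub_rpow_sub hp₁ hp₂ s (abs_nonneg m) ht hmt
  have heven : |s + (|m|)| ^ p + |s - (|m|)| ^ p = |s + m| ^ p + |s - m| ^ p := by
    rcases abs_choice m with hm | hm <;> rw [hm]
    rw [sub_neg_eq_add, ← sub_eq_add_neg, add_comm]
  simp only [abs_abs, abs_of_nonneg ht] at h
  linarith

theorem two_rpow_one_sub_mul_rpow_two_mul {p x : ℝ} (hx : 0 ≤ x) :
    (2 : ℝ) ^ (1 - p) * (2 * x) ^ p = 2 * x ^ p := by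
  rw [Real.mul_rpow zero_le_two hx, ← mul_assoc, ← Real.rpow_add zero_lt_two, sub_add_cancel,
    Real.rpow_one]

theorem stmt_10 (α a b c : ℝ) (hα1 : 1 / 2 ≤ α) (hα2 : α ≤ 1) (hb : 0 ≤ b) :
    (c < a →
      |a| ^ (2 * α) - |c| ^ (2 * α) - |a - b| ^ (2 * α) + |c - b| ^ (2 * α) ≤
        2 ^ (1 - 2 * α) * ((a - c + b) ^ (2 * α) - |a - c - b| ^ (2 * α))) ∧
    (a ≤ c →
      |a| ^ (2 * α) - |c| ^ (2 * α) - |a - b| ^ (2 * α) + |c - b| ^ (2 * α) ≤ 0) := by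
  have hp₁ : 1 ≤ 2 * α := by linarith
  refine ⟨fun hca ↦ ?_, fun hac ↦ ?_⟩
  · have key := abs_add_rpow_add_abs_sub_rpow_sub_le hp₁ (by linarith)
      (s := (a + c - b) / 2) (m := (a - c - b) / 2) (t := (a - c + b) / 2)
      (abs_le.2 ⟨by linarith, by linarith⟩)
    rw [show (a + c - b) / 2 + (a - c + b) / 2 = a by ring,
      show (a + c - b) / 2 - (a - c + b) / 2 = c - b by ring,
      show (a + c - b) / 2 + (a - c - b) / 2 = a - b by ring,
      show (a + c - b) / 2 - (a - c - b) / 2 = c by ring] at key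
    rw [show a - c + b = 2 * ((a - c + b) / 2) by ring,
      show |a - c - b| = 2 * |(a - c - b) / 2| by rw [← abs_two, ← abs_mul]; ring_nf, mul_sub,
      two_rpow_one_sub_mul_rpow_two_mul (by linarith),
      two_rpow_one_sub_mul_rpow_two_mul (abs_nonneg _)]
    linarith
  · linarith [(convexOn_abs_rpow hp₁).add_le_add_of_add_eq (mem_univ (a - b)) (mem_univ c)
      (x₂ := a) (x₃ := c - b) (by linarith) (by linarith) (by ring)]
end

section
/- Let α ∈ [0,1], b, c ≥ 0, s ∈ [−1,1], and assume 2sc ≤ b. Then −c^(2α) + (c² − 2scb + b²)^α ≤ −|sc|^(2α) + |sc − b|^(2α). -/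
/-!
The function `x ↦ x ^ α` is concave on `[0, ∞)`, so its increments over a fixed step
`d = b² - 2scb ≥ 0` decrease as the base point grows. Comparing the base points
`(sc)² ≤ c²` gives `(c² + d) ^ α - (c²) ^ α ≤ ((sc)² + d) ^ α - ((sc)²) ^ α`, and
`c² + d = c² - 2scb + b²`, `(sc)² + d = (sc - b)²`.
-/

open Set

theorem ConcaveOn.map_add_sub_map_le_of_le {s : Set ℝ} {f : ℝ → ℝ} (hf : ConcaveOn ℝ s f)
    {a b d : ℝ} (ha : a ∈ s) (hbd : b + d ∈ s) (hab : a ≤ b) (hd : 0 ≤ d) :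
    f (b + d) - f b ≤ f (a + d) - f a := by
  rcases (add_nonneg (sub_nonneg.2 hab) hd).eq_or_lt with hL | hL
  · obtain rfl : d = 0 := by linarith
    obtain rfl : b = a := by linarith
    simp
  set L := b - a + d with hL_def
  -- `a + d` and `b` are the convex combinations of `a` and `b + d` with swapped weights `d / L`
  have ht : 0 ≤ d / L := div_nonneg hd hL.le
  have ht' : 0 ≤ (b - a) / L := div_nonneg (sub_nonneg.2 hab) hL.le
  have hsum : (b - a) / L + d / L = 1 := by field_simp; rw [hL_def]
  have hsum' : d / L + (b - a) / L = 1 := by linarith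
  have h₁ := hf.2 ha hbd ht' ht hsum
  have h₂ := hf.2 ha hbd ht ht' hsum'
  simp only [smul_eq_mul] at h₁ h₂
  have e₁ : (b - a) / L * a + d / L * (b + d) = a + d := by
    field_simp [hL.ne']; rw [hL_def]; ring
  have e₂ : d / L * a + (b - a) / L * (b + d) = b := by
    field_simp [hL.ne']; rw [hL_def]; ring
  rw [e₁] at h₁
  rw [e₂] at h₂
  calc f (b + d) - f b
      = ((b - a) / L + d / L) * f a + (d / L + (b - a) / L) * f (b + d) - f a - f b := by
        rw [hsum, hsum']; ring
    _ ≤ f (a + d) - f a := by linarith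

theorem Real.abs_rpow_two_mul (x α : ℝ) : |x| ^ (2 * α) = (x ^ 2) ^ α := by
  rw [Real.rpow_mul (abs_nonneg x), Real.rpow_two, sq_abs]

theorem stmt_11 (α b c s : ℝ) (hα0 : 0 ≤ α) (hα1 : α ≤ 1) (hb : 0 ≤ b) (hc : 0 ≤ c)
    (hs1 : -1 ≤ s) (hs2 : s ≤ 1) (hscb : 2 * s * c ≤ b) :
    -c ^ (2 * α) + (c ^ 2 - 2 * s * c * b + b ^ 2) ^ α ≤
      -|s * c| ^ (2 * α) + |s * c - b| ^ (2 * α) := by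
  have hd : 0 ≤ b ^ 2 - 2 * s * c * b := by nlinarith
  have hsc : (s * c) ^ 2 ≤ c ^ 2 := by
    rw [mul_pow]; nlinarith [sq_le_one_iff_abs_le_one s |>.2 (abs_le.2 ⟨hs1, hs2⟩)]
  have key := (Real.concaveOn_rpow hα0 hα1).map_add_sub_map_le_of_le
    (sq_nonneg (s * c)) (mem_Ici.2 (add_nonneg (sq_nonneg c) hd)) hsc hd
  rw [show c ^ 2 + (b ^ 2 - 2 * s * c * b) = c ^ 2 - 2 * s * c * b + b ^ 2 by ring,
    show (s * c) ^ 2 + (b ^ 2 - 2 * s * c * b) = (s * c - b) ^ 2 by ring] at key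
  have hc' : c ^ (2 * α) = (c ^ 2) ^ α := by
    simpa [abs_of_nonneg hc] using Real.abs_rpow_two_mul c α
  rw [hc', Real.abs_rpow_two_mul, Real.abs_rpow_two_mul]
  linarith
end

section
/- Let α ∈ [1/2, 1], a, y ≥ 0 with y ≤ a. Then a^(2α) + (4ay + y²)^α ≤ (a+y)^(2α) + 2a·y^(2α−1). -/
/-!
Put `A = a²`, `B = 4ay + y²`, `C = (a + y)²` and `E = 2ay`, so that `A + B = C + E`, and note
`E ^ α ≤ 2a y^(2α-1)`. Bounding `A ^ α` and `B ^ α` by tangent lines of the concave `x ↦ x ^ α`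
at `E` and `C` gives `A ^ α + B ^ α ≤ C ^ α + E ^ α` up to a correction term.

If `a ≤ 2y`, then `A ≤ E ≤ C ≤ B` and the correction is nonpositive. If `2y ≤ a`, the correction
is positive and has to be absorbed by the slack in `E ^ α ≤ 2a y^(2α-1)`: comparing each power
`x ^ (α-1)` with `E ^ (α-1)` through `exp t ≥ 1 + t` reduces this to an elementary inequality
between logarithms, which follows from `log x ≤ x - 1` and `log 2 > 5/8`.
-/

open Real

lemma rpow_le_tangent_line {p x z : ℝ} (hp₀ : 0 ≤ p) (hp₁ : p ≤ 1) (hx : 0 ≤ x) (hz : 0 < z) :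
    x ^ p ≤ z ^ p + p * z ^ (p - 1) * (x - z) := by
  have hamgm := geom_mean_le_arith_mean2_weighted hp₀ (sub_nonneg.2 hp₁) hx hz.le (by ring)
  have hz_inv : z ^ (1 - p) * z ^ (p - 1) = 1 := by
    rw [← rpow_add hz, show 1 - p + (p - 1) = 0 by ring, rpow_zero]
  have hzp : z ^ p = z * z ^ (p - 1) := by
    rw [rpow_sub_one hz.ne', mul_div_cancel₀ _ hz.ne']
  calc x ^ p = x ^ p * z ^ (1 - p) * z ^ (p - 1) := by rw [mul_assoc, hz_inv, mul_one]
    _ ≤ (p * x + (1 - p) * z) * z ^ (p - 1) := by gcongr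
    _ = z ^ p + p * z ^ (p - 1) * (x - z) := by rw [hzp]; ring

lemma rpow_add_rpow_le_of_add_eq {p x x' z w : ℝ} (hp₀ : 0 ≤ p) (hp₁ : p ≤ 1) (hx : 0 ≤ x)
    (hx' : 0 ≤ x') (hz : 0 < z) (hw : 0 < w) (h : x + x' = z + w) :
    x ^ p + x' ^ p ≤ z ^ p + w ^ p + p * (x - z) * (z ^ (p - 1) - w ^ (p - 1)) := by
  have hx_le := rpow_le_tangent_line hp₀ hp₁ hx hz
  have hx'_le := rpow_le_tangent_line hp₀ hp₁ hx' hw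
  rw [show x' - w = -(x - z) by linarith] at hx'_le
  linarith

lemma rpow_mul_one_add_mul_log_sub_le {x z : ℝ} (hx : 0 < x) (hz : 0 < z) (q : ℝ) :
    z ^ q * (1 + q * (log x - log z)) ≤ x ^ q := by
  have hxq : x ^ q = z ^ q * exp (q * (log x - log z)) := by
    rw [rpow_def_of_pos hx, rpow_def_of_pos hz, ← exp_add]
    ring_nf
  rw [hxq]
  gcongr
  linarith [add_one_le_exp (q * (log x - log z))]

lemma mul_rpow_sub_one_self {x : ℝ} (hx : 0 < x) (p : ℝ) : x * x ^ (p - 1) = x ^ p := by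
  rw [rpow_sub_one hx.ne', mul_div_cancel₀ _ hx.ne']

lemma two_mul_mul_rpow_two_mul_sub_one {a y : ℝ} (hy : 0 < y) (α : ℝ) :
    2 * a * y ^ (2 * α - 1) = 2 * a * y * (y ^ 2) ^ (α - 1) := by
  rw [show 2 * α - 1 = 1 + 2 * (α - 1) by ring, rpow_add hy, rpow_one, rpow_mul hy.le, rpow_two]
  ring

lemma rpow_two_mul_mul_le {α a y : ℝ} (hα : α ≤ 1) (hy : 0 < y) (hya : y ≤ 2 * a) :
    (2 * a * y) ^ α ≤ 2 * a * y ^ (2 * α - 1) := by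
  have hE : 0 < 2 * a * y := by nlinarith
  rw [two_mul_mul_rpow_two_mul_sub_one hy, ← mul_rpow_sub_one_self hE]
  gcongr ?_ * ?_
  exact rpow_le_rpow_of_nonpos (by positivity) (by nlinarith) (by linarith)

lemma mul_log_sub_log_le_mul_log_sub_log {a y : ℝ} (hy : 0 < y) (h2y : 2 * y ≤ a) :
    (2 * a * y + y ^ 2) * (log ((a + y) ^ 2) - log (2 * a * y)) ≤
      2 * a * y * (log (2 * a * y) - log (y ^ 2)) := by
  have ha : 0 < a := by linarith
  have hG₀ : 0 ≤ log (a + y) - log a := sub_nonneg.2 (log_le_log ha (by linarith))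
  have hG₁ : a * (log (a + y) - log a) ≤ y := by
    have := log_le_sub_one_of_pos (show 0 < (a + y) / a by positivity)
    rw [log_div (by positivity) ha.ne', div_sub_one ha.ne', le_div_iff₀ ha] at this
    linarith
  have hL₁ : 2 * y * (log a - log 2 - log y) ≤ a - 2 * y := by
    have := log_le_sub_one_of_pos (show 0 < a / (2 * y) by positivity)
    rw [log_div ha.ne' (by positivity), log_mul two_ne_zero hy.ne', div_sub_one (by positivity),
      le_div_iff₀ (by positivity)] at this
    linarith
  have hlog2 : 0.69 * (a * y) ≤ log 2 * (a * y) :=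
    mul_le_mul_of_nonneg_right (by linarith [log_two_gt_d9]) (by positivity)
  rw [log_pow, log_pow, log_mul (by positivity) hy.ne', log_mul two_ne_zero ha.ne']
  push_cast
  nlinarith [mul_le_mul_of_nonneg_left hG₁ hy.le, mul_le_mul_of_nonneg_left hL₁ hy.le,
    mul_le_mul_of_nonneg_left (mul_le_mul_of_nonneg_right h2y hG₀) hy.le,
    mul_le_mul_of_nonneg_left h2y hy.le]

lemma rpow_add_mul_rpow_sub_rpow_le {α a y : ℝ} (hα₀ : 0 ≤ α) (hα₁ : α ≤ 1) (hy : 0 < y)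
    (h2y : 2 * y ≤ a) :
    (2 * a * y) ^ α + α * (2 * a * y + y ^ 2) * ((2 * a * y) ^ (α - 1) - ((a + y) ^ 2) ^ (α - 1))
      ≤ 2 * a * y ^ (2 * α - 1) := by
  have hE : 0 < 2 * a * y := by nlinarith
  have hk : 0 ≤ α * (2 * a * y + y ^ 2) := by positivity
  have hlog : α * (2 * a * y + y ^ 2) * (log ((a + y) ^ 2) - log (2 * a * y)) ≤
      2 * a * y * (log (2 * a * y) - log (y ^ 2)) := by
    refine le_trans ?_ (mul_log_sub_log_le_mul_log_sub_log hy h2y)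
    rw [mul_assoc]
    exact mul_le_of_le_one_left (mul_nonneg (by positivity)
      (sub_nonneg.2 (log_le_log hE (by nlinarith)))) hα₁
  have hexp_le : (α - 1) * (2 * a * y) ^ (α - 1) ≤ 0 :=
    mul_nonpos_of_nonpos_of_nonneg (by linarith) (by positivity)
  have hy_le := rpow_mul_one_add_mul_log_sub_le (by positivity : 0 < y ^ 2) hE (α - 1)
  have hC_le := rpow_mul_one_add_mul_log_sub_le (by nlinarith : 0 < (a + y) ^ 2) hE (α - 1)
  rw [two_mul_mul_rpow_two_mul_sub_one hy, ← mul_rpow_sub_one_self hE]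
  nlinarith [mul_le_mul_of_nonneg_left hy_le hE.le, mul_le_mul_of_nonneg_left hC_le hk,
    mul_nonneg_of_nonpos_of_nonpos hexp_le (by linarith : 2 * a * y * (log (y ^ 2) -
      log (2 * a * y)) + α * (2 * a * y + y ^ 2) * (log ((a + y) ^ 2) - log (2 * a * y)) ≤ 0)]

theorem stmt_13 (α a y : ℝ) (hα1 : 1 / 2 ≤ α) (hα2 : α ≤ 1) (hy : 0 ≤ y) (hya : y ≤ a) :
    a ^ (2 * α) + (4 * a * y + y ^ 2) ^ α ≤ (a + y) ^ (2 * α) + 2 * a * y ^ (2 * α - 1) := by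
  have hα₀ : 0 < α := by linarith
  obtain rfl | hy₀ := hy.eq_or_lt
  · have : 0 ≤ 2 * a * (0 : ℝ) ^ (2 * α - 1) := mul_nonneg (by linarith) (by positivity)
    simpa [zero_rpow hα₀.ne'] using this
  have ha : 0 < a := hy₀.trans_le hya
  have hE : 0 < 2 * a * y := by positivity
  have hC : 0 < (a + y) ^ 2 := by positivity
  have hEC : ((a + y) ^ 2) ^ (α - 1) ≤ (2 * a * y) ^ (α - 1) :=
    rpow_le_rpow_of_nonpos hE (by nlinarith) (by linarith)
  rw [rpow_mul ha.le, rpow_mul (by positivity : 0 ≤ a + y), rpow_two, rpow_two]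
  rcases le_total a (2 * y) with h | h
  · have hpair := rpow_add_rpow_le_of_add_eq hα₀.le hα2 (by positivity : 0 ≤ a ^ 2)
      (by positivity : 0 ≤ 4 * a * y + y ^ 2) hE hC (by ring)
    have hcorr : α * (a ^ 2 - 2 * a * y) * ((2 * a * y) ^ (α - 1) - ((a + y) ^ 2) ^ (α - 1)) ≤ 0 :=
      mul_nonpos_of_nonpos_of_nonneg (mul_nonpos_of_nonneg_of_nonpos hα₀.le (by nlinarith))
        (by linarith)
    linarith [rpow_two_mul_mul_le hα2 hy₀ (by linarith : y ≤ 2 * a)]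
  · have hpair := rpow_add_rpow_le_of_add_eq hα₀.le hα2 (by positivity : 0 ≤ 4 * a * y + y ^ 2)
      (by positivity : 0 ≤ a ^ 2) hE hC (by ring)
    rw [show 4 * a * y + y ^ 2 - 2 * a * y = 2 * a * y + y ^ 2 by ring] at hpair
    linarith [rpow_add_mul_rpow_sub_rpow_le hα₀.le hα2 hy₀ h]
end

section
/- Let x, a, b, c ≥ 0 with b ≤ 2x, x + b ≥ c, and x ≤ c, and let α ∈ [1/2,1]. Then (x+b)^(2α) + (c² − 2xb + b²)^α ≤ c^(2α) + x^(2α) + 2b^(2α). -/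
/-!
With `f t = t ^ α`, concave on `[0, ∞)`, the claim compares `f` at squares: `(x + b)² + (c² - 2xb + b²)`
equals `c² + (x² + 2b²)`, and `c² - 2xb + b²` lies below both `c²` (as `b ≤ 2x`) and `x² + 2b²`
(as `c ≤ x + b`). Spreading two points apart at fixed sum lowers `f u + f v` for concave `f`, so
`f((x + b)²) + f(c² - 2xb + b²) ≤ f(c²) + f(x² + 2b²)`, and subadditivity of `f` splits
`f(x² + 2b²)` into `f(x²) + 2 f(b²)`.
-/

open Real Set

theorem ConcaveOn.add_le_add_of_le_of_add_eq {s : Set ℝ} {f : ℝ → ℝ} (hf : ConcaveOn ℝ s f)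
    {u v p q : ℝ} (hu : u ∈ s) (hv : v ∈ s) (hvp : v ≤ p) (hvq : v ≤ q) (hsum : u + v = p + q) :
    f u + f v ≤ f p + f q := by
  rcases (hvq.trans (by linarith : q ≤ u)).eq_or_lt with rfl | hvu
  · obtain rfl : p = v := by linarith
    obtain rfl : q = p := by linarith
    rfl
  set l := (q - v) / (u - v)
  have hl₀ : 0 ≤ l := div_nonneg (by linarith) (by linarith)
  have hl₁ : l ≤ 1 := (div_le_one (by linarith)).2 (by linarith)
  have hq : l * u + (1 - l) * v = q := by
    simp only [l]; field_simp [(sub_pos.2 hvu).ne']; ring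
  have hp : (1 - l) * u + l * v = p := by linear_combination hsum - hq
  have hfq := hf.2 hu hv hl₀ (sub_nonneg.2 hl₁) (add_sub_cancel l 1)
  have hfp := hf.2 hu hv (sub_nonneg.2 hl₁) hl₀ (sub_add_cancel 1 l)
  simp only [smul_eq_mul, hq, hp] at hfq hfp
  linarith

theorem stmt_14_general (α x b c : ℝ) (hα1 : 1 / 2 ≤ α) (hα2 : α ≤ 1)
    (hx : 0 ≤ x) (hb : 0 ≤ b) (hc : 0 ≤ c)
    (hb2x : b ≤ 2 * x) (hxbc : c ≤ x + b) (hxc : x ≤ c) :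
    (x + b) ^ (2 * α) + (c ^ 2 - 2 * x * b + b ^ 2) ^ α ≤
      c ^ (2 * α) + x ^ (2 * α) + 2 * b ^ (2 * α) := by
  have hα0 : 0 ≤ α := by linarith
  have hsq : ∀ t : ℝ, 0 ≤ t → t ^ (2 * α) = (t ^ 2) ^ α := fun t ht => by
    rw [rpow_mul ht, rpow_two]
  rw [hsq _ (add_nonneg hx hb), hsq _ hc, hsq _ hx, hsq _ hb]
  have hv : 0 ≤ c ^ 2 - 2 * x * b + b ^ 2 := by
    nlinarith [sq_nonneg (c - b), mul_nonneg hb (sub_nonneg.2 hxc)]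
  have hconcave : ((x + b) ^ 2) ^ α + (c ^ 2 - 2 * x * b + b ^ 2) ^ α ≤
      (c ^ 2) ^ α + (x ^ 2 + 2 * b ^ 2) ^ α :=
    (concaveOn_rpow hα0 hα2).add_le_add_of_le_of_add_eq (mem_Ici.2 (sq_nonneg _)) hv
      (by nlinarith) (by nlinarith) (by ring)
  have hsubadd : (x ^ 2 + 2 * b ^ 2) ^ α ≤ (x ^ 2) ^ α + 2 * (b ^ 2) ^ α :=
    calc (x ^ 2 + 2 * b ^ 2) ^ α = (x ^ 2 + (b ^ 2 + b ^ 2)) ^ α := by ring_nf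
      _ ≤ (x ^ 2) ^ α + (b ^ 2 + b ^ 2) ^ α :=
        rpow_add_le_add_rpow (by positivity) (by positivity) hα0 hα2
      _ ≤ (x ^ 2) ^ α + 2 * (b ^ 2) ^ α := by
        linarith [rpow_add_le_add_rpow (sq_nonneg b) (sq_nonneg b) hα0 hα2]
  linarith

theorem stmt_14 (α x a b c : ℝ) (hα1 : 1 / 2 ≤ α) (hα2 : α ≤ 1)
    (hx : 0 ≤ x) (hb : 0 ≤ b) (hc : 0 ≤ c)
    (hb2x : b ≤ 2 * x) (hxbc : c ≤ x + b) (hxc : x ≤ c) :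
    (x + b) ^ (2 * α) + (c ^ 2 - 2 * x * b + b ^ 2) ^ α ≤
      c ^ (2 * α) + x ^ (2 * α) + 2 * b ^ (2 * α) :=
  stmt_14_general α x b c hα1 hα2 hx hb hc hb2x hxbc hxc
end

section
/- Let α ∈ [0,1], a, b, c ≥ 0, s ∈ [−1,1]. Assume b/2 ≤ sc, sc ≥ a − b, and a ≥ c. Then a^(2α) − c^(2α) − (a−b)^(2α) + (c² − 2scb + b²)^α ≤ 2·b^α·(a − sc)^α. -/
/-!
Put `x = a²`, `y = c²`, `u = (a - b)²` and `v = c² - 2scb + b²`, so that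
`0 ≤ v ≤ y ≤ x` and `x - y + v = u + 2b(a - sc)`. Concavity of `t ↦ t ^ α` gives
`x ^ α + v ^ α ≤ y ^ α + (x - y + v) ^ α`, and subadditivity of the same function bounds
`(u + b(a - sc) + b(a - sc)) ^ α` by `u ^ α + 2 (b(a - sc)) ^ α`.
-/

open Real

lemma ConcaveOn.add_le_add_of_add_eq {𝕜 β : Type*}
    [Field 𝕜] [LinearOrder 𝕜] [IsStrictOrderedRing 𝕜] [AddCommGroup β]
    [PartialOrder β] [IsOrderedAddMonoid β] [Module 𝕜 β] {s : Set 𝕜}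
    {f : 𝕜 → β} (hf : ConcaveOn 𝕜 s f) {p q q' r : 𝕜} (hp : p ∈ s) (hr : r ∈ s)
    (hpq : p ≤ q) (hqr : q ≤ r) (hsum : q + q' = p + r) :
    f p + f r ≤ f q + f q' := by
  rcases hpq.eq_or_lt with rfl | hpq'
  · obtain rfl : q' = r := by linarith
    exact le_rfl
  have hL : 0 < r - p := by linarith
  set t := (q - p) / (r - p)
  have ht0 : 0 ≤ t := div_nonneg (by linarith) hL.le
  have ht1 : t ≤ 1 := (div_le_one hL).2 (by linarith)
  have htL : t * (r - p) = q - p := div_mul_cancel₀ _ hL.ne'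
  have hq : (1 - t) • p + t • r = q := by
    simp only [smul_eq_mul]; linear_combination htL
  have hq' : t • p + (1 - t) • r = q' := by
    simp only [smul_eq_mul]; linear_combination -hsum - htL
  have h₁ := hf.2 hp hr (sub_nonneg.2 ht1) ht0 (by ring)
  have h₂ := hf.2 hp hr ht0 (sub_nonneg.2 ht1) (by ring)
  rw [hq] at h₁
  rw [hq'] at h₂
  calc f p + f r = ((1 - t) • f p + t • f r) + (t • f p + (1 - t) • f r) := by module
    _ ≤ f q + f q' := add_le_add h₁ h₂

lemma Real.two_mul_rpow_le {α t : ℝ} (hα0 : 0 ≤ α) (hα1 : α ≤ 1) (ht : 0 ≤ t) :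
    (2 * t) ^ α ≤ 2 * t ^ α := by
  rw [two_mul, two_mul]
  exact rpow_add_le_add_rpow ht ht hα0 hα1

lemma Real.rpow_two_mul {x : ℝ} (hx : 0 ≤ x) (α : ℝ) : x ^ (2 * α) = (x ^ 2) ^ α := by
  rw [rpow_mul hx, rpow_two]

theorem stmt_15_general (α a b c s : ℝ) (hα0 : 0 ≤ α) (hα1 : α ≤ 1)
    (hb : 0 ≤ b) (hc : 0 ≤ c) (hs2 : s ≤ 1)
    (h1 : b / 2 ≤ s * c) (h3 : c ≤ a) :
    a ^ (2 * α) - c ^ (2 * α) - |a - b| ^ (2 * α) + (c ^ 2 - 2 * s * c * b + b ^ 2) ^ α ≤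
      2 * b ^ α * (a - s * c) ^ α := by
  set v := c ^ 2 - 2 * s * c * b + b ^ 2
  have hasc : 0 ≤ a - s * c := by nlinarith
  have hv : 0 ≤ v := by nlinarith [sq_nonneg (c - b), mul_nonneg hc hb]
  have hvc : v ≤ c ^ 2 := by nlinarith
  have hca : c ^ 2 ≤ a ^ 2 := pow_le_pow_left₀ hc h3 2
  have concave := (concaveOn_rpow hα0 hα1).add_le_add_of_add_eq (q' := a ^ 2 - c ^ 2 + v)
    (Set.mem_Ici.2 hv) (Set.mem_Ici.2 (hv.trans (hvc.trans hca))) hvc hca (by ring)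
  have hsplit : a ^ 2 - c ^ 2 + v = |a - b| ^ 2 + 2 * (b * (a - s * c)) := by
    rw [sq_abs]; ring
  have subadd := rpow_add_le_add_rpow (sq_nonneg |a - b|)
    (by positivity : 0 ≤ 2 * (b * (a - s * c))) hα0 hα1
  have hdouble := two_mul_rpow_le hα0 hα1 (mul_nonneg hb hasc)
  rw [mul_rpow hb hasc] at hdouble
  rw [hsplit] at concave
  rw [rpow_two_mul (hc.trans h3), rpow_two_mul hc, rpow_two_mul (abs_nonneg _)]
  linarith

theorem stmt_15 (α a b c s : ℝ) (hα0 : 0 ≤ α) (hα1 : α ≤ 1)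
    (ha : 0 ≤ a) (hb : 0 ≤ b) (hc : 0 ≤ c) (hs1 : -1 ≤ s) (hs2 : s ≤ 1)
    (h1 : b / 2 ≤ s * c) (h2 : a - b ≤ s * c) (h3 : c ≤ a) :
    a ^ (2 * α) - c ^ (2 * α) - |a - b| ^ (2 * α) + (c ^ 2 - 2 * s * c * b + b ^ 2) ^ α ≤
      2 * b ^ α * (a - s * c) ^ α :=
  stmt_15_general α a b c s hα0 hα1 hb hc hs2 h1 h3
end

section
/- Let (Q,d) be a metric space and y, z, q, p ∈ Q, α ∈ [1/2, 1]. Assume the quadruple inequality d(y,q)² − d(y,p)² − d(z,q)² + d(z,p)² ≤ 2·d(y,z)·d(q,p). Then d(y,q)^(2α) − d(y,p)^(2α) − d(z,q)^(2α) + d(z,p)^(2α) ≤ 8α·2^(−2α)·d(y,z)^(2α−1)·d(q,p). -/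
/-!
Write `β = 2α ∈ [1, 2]`, `a = d(y,q)`, `b = d(y,p)`, `c = d(z,q)`, `e = d(z,p)`, `σ = d(y,z)`,
`τ = d(q,p)`. The triangle inequality gives `|a - b|, |c - e| ≤ τ` and `|a - c|, |b - e| ≤ σ`, and
the claim becomes the real inequality `a^β - b^β - c^β + e^β ≤ 2β (σ/2)^(β-1) τ`. It is homogeneous
of degree `β` and symmetric under exchanging `(b, σ)` with `(c, τ)`, so we may assume `τ ≤ σ = 2`.
The differences `u^β - v^β` are then bounded by the quadratic-plus-linear envelopes
`β(β-1)/2 (u² - v²) ± β(2-β)(u - v)` (from above always, from below for `u ≤ 1`), or, when the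
relevant points lie above `1`, by tangents of the concave `t ↦ t^(β/2)` at squares; either way the
quadruple inequality for the squares yields the claim. The remaining configuration
`b ≤ a ≤ c`, `b ≤ e ≤ c`, `a + b ≥ 4` uses the midpoint bound
`u^β - v^β ≤ β (u - v) ((u + v)/2)^(β-1)` and the scalar inequality
`r^(β-1) - (r - 2)(r + 4)^(β-2) ≤ 2` for `r ≥ 2`.
-/

open Real Set

theorem monotoneOn_of_hasDerivAt_of_nonneg {D : Set ℝ} (hD : Convex ℝ D) {f f' : ℝ → ℝ}
    (hf : ∀ x, HasDerivAt f (f' x) x) (hf'₀ : ∀ x ∈ interior D, 0 ≤ f' x) :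
    MonotoneOn f D :=
  monotoneOn_of_hasDerivWithinAt_nonneg hD (fun x _ => (hf x).continuousAt.continuousWithinAt)
    (fun x _ => (hf x).hasDerivWithinAt) hf'₀

theorem antitoneOn_of_hasDerivAt_of_nonpos {D : Set ℝ} (hD : Convex ℝ D) {f f' : ℝ → ℝ}
    (hf : ∀ x, HasDerivAt f (f' x) x) (hf'₀ : ∀ x ∈ interior D, f' x ≤ 0) :
    AntitoneOn f D :=
  antitoneOn_of_hasDerivWithinAt_nonpos hD (fun x _ => (hf x).continuousAt.continuousWithinAt)
    (fun x _ => (hf x).hasDerivWithinAt) hf'₀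

theorem rpow_le_rpow_add_mul_sub {θ x y : ℝ} (hθ₀ : 0 ≤ θ) (hθ₁ : θ ≤ 1) (hx : 0 ≤ x)
    (hy : 0 < y) : x ^ θ ≤ y ^ θ + θ * y ^ (θ - 1) * (x - y) := by
  have hbern := rpow_one_add_le_one_add_mul_self (s := x / y - 1)
    (by linarith [div_nonneg hx hy.le]) hθ₀ hθ₁
  rw [add_sub_cancel, div_rpow hx hy.le, div_le_iff₀ (rpow_pos_of_pos hy θ)] at hbern
  have hy' : y ^ θ = y ^ (θ - 1) * y := by rw [← rpow_add_one hy.ne']; ring_nf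
  calc x ^ θ ≤ (1 + θ * (x / y - 1)) * y ^ θ := hbern
    _ = y ^ θ + θ * y ^ (θ - 1) * (x - y) := by rw [hy']; field_simp

theorem rpow_sub_rpow_le_mul_sq_sub_sq {β x y : ℝ} (hβ₀ : 0 ≤ β) (hβ₂ : β ≤ 2) (hx : 0 ≤ x)
    (hy : 0 < y) : x ^ β - y ^ β ≤ β / 2 * y ^ (β - 2) * (x ^ 2 - y ^ 2) := by
  have hsq : ∀ {t : ℝ} (γ : ℝ), 0 ≤ t → (t ^ 2) ^ (γ / 2) = t ^ γ := fun γ ht => by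
    rw [← rpow_natCast, ← rpow_mul ht]; ring_nf
  have h := rpow_le_rpow_add_mul_sub (θ := β / 2) (by linarith) (by linarith) (sq_nonneg x)
    (pow_pos hy 2)
  rw [hsq β hx, hsq β hy.le, show β / 2 - 1 = (β - 2) / 2 by ring, hsq _ hy.le] at h
  linarith

theorem hasDerivAt_rpow_sub_quadratic_add_linear {β p q : ℝ} (hβ₁ : 1 ≤ β) (t : ℝ) :
    HasDerivAt (fun w => w ^ β - p / 2 * w ^ 2 + q * w) (β * t ^ (β - 1) - p * t + q) t := by
  have h := ((hasDerivAt_rpow_const (x := t) (Or.inr hβ₁)).sub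
    ((hasDerivAt_pow 2 t).const_mul (p / 2))).add ((hasDerivAt_id t).const_mul q)
  exact h.congr_deriv (by ring)

theorem rpow_sub_rpow_le_quadratic_add_linear {β u v : ℝ} (hβ₁ : 1 ≤ β) (hβ₂ : β ≤ 2)
    (hv : 0 ≤ v) (hvu : v ≤ u) :
    u ^ β - v ^ β ≤ β * (β - 1) / 2 * (u ^ 2 - v ^ 2) + β * (2 - β) * (u - v) := by
  have hanti := antitoneOn_of_hasDerivAt_of_nonpos (convex_Ici 0)
    (hasDerivAt_rpow_sub_quadratic_add_linear (p := β * (β - 1)) (q := -(β * (2 - β))) hβ₁)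
    fun t ht => by
      rw [interior_Ici] at ht
      -- Bernoulli: `t ^ (β - 1) ≤ 1 + (β - 1) * (t - 1)`
      have hbern := rpow_one_add_le_one_add_mul_self (s := t - 1) (p := β - 1)
        (by linarith [mem_Ioi.1 ht]) (by linarith) (by linarith)
      rw [add_sub_cancel] at hbern
      nlinarith
  have := hanti (mem_Ici.2 hv) (mem_Ici.2 (hv.trans hvu)) hvu
  linarith

theorem quadratic_sub_linear_le_rpow_sub_rpow {β u v : ℝ} (hβ₁ : 1 ≤ β) (hβ₂ : β ≤ 2)
    (hv : 0 ≤ v) (hvu : v ≤ u) (hu : u ≤ 1) :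
    β * (β - 1) / 2 * (u ^ 2 - v ^ 2) - β * (2 - β) * (u - v) ≤ u ^ β - v ^ β := by
  have hmono := monotoneOn_of_hasDerivAt_of_nonneg (convex_Icc 0 1)
    (hasDerivAt_rpow_sub_quadratic_add_linear (p := β * (β - 1)) (q := β * (2 - β)) hβ₁)
    fun t ht => by
      rw [interior_Icc] at ht
      have ht' : t ≤ t ^ (β - 1) := by
        simpa using rpow_le_rpow_of_exponent_ge ht.1 ht.2.le (by linarith : β - 1 ≤ 1)
      nlinarith [mul_le_mul_of_nonneg_left ht' (by linarith : (0 : ℝ) ≤ β),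
        mul_nonneg (mul_nonneg (by linarith : (0 : ℝ) ≤ β) ht.1.le) (by linarith : (0 : ℝ) ≤ 2 - β)]
  have := hmono ⟨hv, hvu.trans hu⟩ ⟨hv.trans hvu, hu⟩ hvu
  linarith

theorem quadratic_add_linear_le {β τ X s t : ℝ} (hβ₁ : 1 ≤ β) (hβ₂ : β ≤ 2) (hX : X ≤ 4 * τ)
    (hs : s ≤ τ) (ht : t ≤ τ) :
    β * (β - 1) / 2 * X + β * (2 - β) * (s + t) ≤ 2 * β * τ := by
  have h₁ : 0 ≤ β * (β - 1) / 2 := by positivity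
  have h₂ : 0 ≤ β * (2 - β) := by nlinarith
  nlinarith [mul_le_mul_of_nonneg_left hX h₁, mul_le_mul_of_nonneg_left (add_le_add hs ht) h₂]

theorem rpow_sub_rpow_le_mul_rpow_midpoint {β u v : ℝ} (hβ₁ : 1 ≤ β) (hβ₂ : β ≤ 2)
    (hv : 0 ≤ v) (hvu : v ≤ u) :
    u ^ β - v ^ β ≤ β * (u - v) * ((u + v) / 2) ^ (β - 1) := by
  set m := (u + v) / 2 with hm
  set f : ℝ → ℝ := fun t => 2 * β * m ^ (β - 1) * t - (m + t) ^ β + (m - t) ^ β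
  have hf : ∀ t, HasDerivAt f
      (2 * β * m ^ (β - 1) - β * (m + t) ^ (β - 1) - β * (m - t) ^ (β - 1)) t := fun t => by
    have h₁ := ((hasDerivAt_id t).const_add m).rpow_const (p := β) (Or.inr hβ₁)
    have h₂ := ((hasDerivAt_id t).const_sub m).rpow_const (p := β) (Or.inr hβ₁)
    exact (((hasDerivAt_id t).const_mul (2 * β * m ^ (β - 1))).sub h₁ |>.add h₂).congr_deriv
      (by simp only [id]; ring)
  have hmono : MonotoneOn f (Icc 0 m) := by
    refine monotoneOn_of_hasDerivAt_of_nonneg (convex_Icc 0 m) hf fun t ht => ?_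
    rw [interior_Icc] at ht
    -- midpoint concavity of `x ↦ x ^ (β - 1)` at `m ± t`
    have hconc := (concaveOn_rpow (p := β - 1) (by linarith) (by linarith)).2
      (mem_Ici.2 (by linarith [ht.1, ht.2] : (0 : ℝ) ≤ m + t))
      (mem_Ici.2 (by linarith [ht.2] : (0 : ℝ) ≤ m - t))
      (by norm_num : (0 : ℝ) ≤ 1 / 2) (by norm_num : (0 : ℝ) ≤ 1 / 2) (by norm_num)
    simp only [smul_eq_mul, show 1 / 2 * (m + t) + 1 / 2 * (m - t) = m by ring] at hconc
    nlinarith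
  have hd : (u - v) / 2 ∈ Icc 0 m := ⟨by linarith, by rw [hm]; linarith⟩
  have key := hmono ⟨le_rfl, hd.1.trans hd.2⟩ hd hd.1
  simp only [f, mul_zero, add_zero, sub_zero, zero_sub] at key
  rw [show m + (u - v) / 2 = u by ring, show m - (u - v) / 2 = v by ring] at key
  linarith

theorem rpow_sub_one_sub_mul_rpow_sub_two_le_two {β r : ℝ} (hβ₂ : β ≤ 2)
    (hr : 2 ≤ r) : r ^ (β - 1) - (r - 2) * (r + 4) ^ (β - 2) ≤ 2 := by
  set θ := 2 - β
  have hr₀ : 0 < r := by linarith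
  have hθ₀ : 0 ≤ θ := by linarith
  have hlog_r : 2 - 4 / r ≤ log r := by
    have h₁ := one_sub_inv_le_log_of_pos (by positivity : 0 < r / 4)
    rw [log_div hr₀.ne' (by norm_num), inv_div] at h₁
    have h₂ : 1 < log 4 := by
      rw [show (4 : ℝ) = 2 ^ 2 by norm_num, log_pow]; push_cast; linarith [log_two_gt_d9]
    linarith
  have hpow_r : 1 + θ * (2 - 4 / r) ≤ r ^ θ := by
    rw [rpow_def_of_pos hr₀]
    nlinarith [add_one_le_exp (log r * θ)]
  have hpow_quot : 1 - θ * (4 / r) ≤ (1 + 4 / r) ^ (-θ) := by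
    have hq : 0 < 1 + 4 / r := by positivity
    rw [rpow_def_of_pos hq]
    have := log_le_sub_one_of_pos hq
    nlinarith [add_one_le_exp (log (1 + 4 / r) * -θ)]
  have hsplit : (r + 4) ^ (-θ) = r ^ (-θ) * (1 + 4 / r) ^ (-θ) := by
    rw [← mul_rpow hr₀.le (by positivity)]; field_simp
  have hr_pow : r ^ (1 - θ) = r * r ^ (-θ) := by
    rw [sub_eq_add_neg, rpow_add hr₀, rpow_one]
  have hcancel : r ^ (-θ) * r ^ θ = 1 := by rw [← rpow_add hr₀]; simp
  have hneg : 0 ≤ r ^ (-θ) := by positivity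
  rw [show β - 1 = 1 - θ by ring, show β - 2 = -θ by ring, hr_pow, hsplit]
  calc r * r ^ (-θ) - (r - 2) * (r ^ (-θ) * (1 + 4 / r) ^ (-θ))
      = r ^ (-θ) * (r - (r - 2) * (1 + 4 / r) ^ (-θ)) := by ring
    _ ≤ r ^ (-θ) * (2 * r ^ θ) := by
        gcongr
        have : (r - 2) * (1 - θ * (4 / r)) = r - 2 - 2 * θ * (2 - 4 / r) := by
          field_simp; ring
        nlinarith [mul_le_mul_of_nonneg_left hpow_quot (by linarith : 0 ≤ r - 2)]
    _ = 2 := by rw [mul_left_comm, hcancel, mul_one]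

theorem rpow_quadruple_le_of_one_le {β τ u v w x : ℝ} (hβ₁ : 1 ≤ β) (hβ₂ : β ≤ 2) (hτ : 0 ≤ τ)
    (hx : 0 ≤ x) (hw : 1 ≤ w) (hwv : w ≤ v) (hvu : v ≤ u)
    (hquad : u ^ 2 - v ^ 2 - w ^ 2 + x ^ 2 ≤ 4 * τ) :
    u ^ β - v ^ β - w ^ β + x ^ β ≤ 2 * β * τ := by
  have hw₀ : 0 < w := by linarith
  have huv := rpow_sub_rpow_le_mul_sq_sub_sq (by linarith) hβ₂ (hw₀.le.trans (hwv.trans hvu))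
    (hw₀.trans_le hwv)
  have hxw := rpow_sub_rpow_le_mul_sq_sub_sq (by linarith) hβ₂ hx hw₀
  have hvw : v ^ (β - 2) ≤ w ^ (β - 2) := rpow_le_rpow_of_nonpos hw₀ hwv (by linarith)
  have hw_pow : w ^ (β - 2) ≤ 1 := rpow_le_one_of_one_le_of_nonpos hw (by linarith)
  calc u ^ β - v ^ β - w ^ β + x ^ β
      ≤ β / 2 * v ^ (β - 2) * (u ^ 2 - v ^ 2) + β / 2 * w ^ (β - 2) * (x ^ 2 - w ^ 2) := by
        linarith
    _ ≤ β / 2 * w ^ (β - 2) * (u ^ 2 - v ^ 2) + β / 2 * w ^ (β - 2) * (x ^ 2 - w ^ 2) := by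
        gcongr
        nlinarith
    _ = β / 2 * w ^ (β - 2) * (u ^ 2 - v ^ 2 - w ^ 2 + x ^ 2) := by ring
    _ ≤ β / 2 * w ^ (β - 2) * (4 * τ) := by gcongr
    _ ≤ β / 2 * 1 * (4 * τ) := by gcongr
    _ = 2 * β * τ := by ring

theorem rpow_quadruple_le_of_crossed {β τ a b c e : ℝ} (hβ₁ : 1 ≤ β) (hβ₂ : β ≤ 2) (he : 0 ≤ e)
    (hab : a - b ≤ τ) (hce : c - e ≤ τ) (hquad : a ^ 2 - b ^ 2 - c ^ 2 + e ^ 2 ≤ 4 * τ)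
    (hba : b ≤ a) (hec : e ≤ c) (hca : c ≤ a) (heb : e ≤ b) :
    a ^ β - b ^ β - c ^ β + e ^ β ≤ 2 * β * τ := by
  rcases le_total c 1 with hc₁ | hc₁
  · have := rpow_sub_rpow_le_quadratic_add_linear hβ₁ hβ₂ (he.trans heb) hba
    have := quadratic_sub_linear_le_rpow_sub_rpow hβ₁ hβ₂ he hec hc₁
    have := quadratic_add_linear_le hβ₁ hβ₂ hquad hab hce
    linarith
  rcases le_total b 1 with hb₁ | hb₁
  · have := rpow_sub_rpow_le_quadratic_add_linear hβ₁ hβ₂ (he.trans hec) hca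
    have := quadratic_sub_linear_le_rpow_sub_rpow hβ₁ hβ₂ he heb hb₁
    have := quadratic_add_linear_le hβ₁ hβ₂ (by linarith : a ^ 2 - c ^ 2 - (b ^ 2 - e ^ 2) ≤ _)
      (by linarith : a - c ≤ τ) (by linarith : b - e ≤ τ)
    linarith
  rcases le_total c b with hcb | hbc
  · exact rpow_quadruple_le_of_one_le hβ₁ hβ₂ (by linarith) he hc₁ hcb hba hquad
  · have := rpow_quadruple_le_of_one_le (τ := τ) hβ₁ hβ₂ (by linarith) he hb₁ hbc hca
      (by linarith)
    linarith

theorem rpow_quadruple_le_of_four_le_add {β τ a b c e : ℝ} (hβ₁ : 1 ≤ β) (hβ₂ : β ≤ 2)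
    (hb : 0 ≤ b) (he : 0 ≤ e) (hba : b ≤ a) (hab : a - b ≤ τ) (hsum : 4 ≤ a + b) (hac : a ≤ c)
    (hc : c ≤ (a + b) / 2 + 4) (hquad : a ^ 2 - b ^ 2 - c ^ 2 + e ^ 2 ≤ 4 * τ) :
    a ^ β - b ^ β - c ^ β + e ^ β ≤ 2 * β * τ := by
  set m := (a + b) / 2 with hm
  have hm₂ : 2 ≤ m := by linarith
  have hmc : m ≤ c := by linarith
  have hmid := rpow_sub_rpow_le_mul_rpow_midpoint hβ₁ hβ₂ hb hba
  have htan := rpow_sub_rpow_le_mul_sq_sub_sq (by linarith) hβ₂ he (by linarith : 0 < c)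
  have hm_pow : m ^ (β - 1) = m * m ^ (β - 2) := by
    rw [mul_comm, ← rpow_add_one (by linarith)]; ring_nf
  have hcm : c ^ (β - 2) ≤ m ^ (β - 2) := rpow_le_rpow_of_nonpos (by linarith) hmc (by linarith)
  have hc_far : (m + 4) ^ (β - 2) ≤ c ^ (β - 2) :=
    rpow_le_rpow_of_nonpos (by linarith) hc (by linarith)
  have hkey := rpow_sub_one_sub_mul_rpow_sub_two_le_two hβ₂ hm₂
  have hτ : 0 ≤ τ := by linarith
  have hc_pow : 0 ≤ c ^ (β - 2) := rpow_nonneg (by linarith) _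
  calc a ^ β - b ^ β - c ^ β + e ^ β
      ≤ β * (a - b) * m ^ (β - 1) + β / 2 * c ^ (β - 2) * (e ^ 2 - c ^ 2) := by linarith
    _ ≤ β * (a - b) * m ^ (β - 1) + β / 2 * c ^ (β - 2) * (4 * τ - 2 * m * (a - b)) := by
        gcongr _ + _ * ?_
        rw [hm]
        linarith
    _ = β * (a - b) * (m ^ (β - 1) - m * c ^ (β - 2)) + 2 * β * τ * c ^ (β - 2) := by ring
    _ ≤ β * τ * (m ^ (β - 1) - m * c ^ (β - 2)) + 2 * β * τ * c ^ (β - 2) := by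
        gcongr
        rw [hm_pow]
        nlinarith
    _ = β * τ * (m ^ (β - 1) - (m - 2) * c ^ (β - 2)) := by ring
    _ ≤ β * τ * (m ^ (β - 1) - (m - 2) * (m + 4) ^ (β - 2)) := by gcongr
    _ ≤ β * τ * 2 := by gcongr
    _ = 2 * β * τ := by ring

theorem rpow_quadruple_le_of_shifted {β τ a b c e : ℝ} (hβ₁ : 1 ≤ β) (hβ₂ : β ≤ 2) (hb : 0 ≤ b)
    (hab : a - b ≤ τ) (hce : c - e ≤ τ) (hτ : τ ≤ 2) (heb : e - b ≤ 2)
    (hquad : a ^ 2 - b ^ 2 - c ^ 2 + e ^ 2 ≤ 4 * τ)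
    (hba : b ≤ a) (hec : e ≤ c) (hac : a ≤ c) (hbe : b ≤ e) :
    a ^ β - b ^ β - c ^ β + e ^ β ≤ 2 * β * τ := by
  rcases le_total (a + b) 4 with hsum | hsum
  · have := rpow_sub_rpow_le_quadratic_add_linear hβ₁ hβ₂ hb hba
    have := rpow_le_rpow (hb.trans hbe) hec (by linarith : 0 ≤ β)
    have := quadratic_add_linear_le hβ₁ hβ₂ (X := a ^ 2 - b ^ 2)
      (by nlinarith [mul_le_mul hab hsum (by linarith) (by linarith)]) hab
      (by linarith : (0 : ℝ) ≤ τ)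
    linarith
  · exact rpow_quadruple_le_of_four_le_add hβ₁ hβ₂ hb (hb.trans hbe) hba hab hsum hac
      (by linarith) hquad

theorem rpow_quadruple_le_of_le_of_le {β τ a b c e : ℝ} (hβ₁ : 1 ≤ β) (hβ₂ : β ≤ 2)
    (hb : 0 ≤ b) (he : 0 ≤ e) (hab : a - b ≤ τ) (hce : c - e ≤ τ) (hτ : τ ≤ 2) (heb : e - b ≤ 2)
    (hquad : a ^ 2 - b ^ 2 - c ^ 2 + e ^ 2 ≤ 4 * τ) (hba : b ≤ a) (hec : e ≤ c) :
    a ^ β - b ^ β - c ^ β + e ^ β ≤ 2 * β * τ := by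
  rcases le_total a c with hac | hca <;> rcases le_total e b with heb' | hbe
  · have := rpow_le_rpow (hb.trans hba) hac (by linarith : 0 ≤ β)
    have := rpow_le_rpow he heb' (by linarith : 0 ≤ β)
    nlinarith
  · exact rpow_quadruple_le_of_shifted hβ₁ hβ₂ hb hab hce hτ heb hquad hba hec hac hbe
  · exact rpow_quadruple_le_of_crossed hβ₁ hβ₂ he hab hce hquad hba hec hca heb'
  · have := rpow_sub_rpow_le_quadratic_add_linear hβ₁ hβ₂ (he.trans hec) hca
    have := rpow_sub_rpow_le_quadratic_add_linear hβ₁ hβ₂ hb hbe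
    have := quadratic_add_linear_le hβ₁ hβ₂ (X := a ^ 2 - c ^ 2 + (e ^ 2 - b ^ 2)) (by linarith)
      (by linarith : a - c ≤ τ) (by linarith : e - b ≤ τ)
    linarith

theorem rpow_quadruple_le_of_abs_sub_le_two {β τ a b c e : ℝ} (hβ₁ : 1 ≤ β) (hβ₂ : β ≤ 2)
    (ha : 0 ≤ a) (hb : 0 ≤ b) (hc : 0 ≤ c) (he : 0 ≤ e) (hab : |a - b| ≤ τ) (hce : |c - e| ≤ τ)
    (hac : |a - c| ≤ 2) (hbe : |b - e| ≤ 2) (hτ : τ ≤ 2)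
    (hquad : a ^ 2 - b ^ 2 - c ^ 2 + e ^ 2 ≤ 4 * τ) :
    a ^ β - b ^ β - c ^ β + e ^ β ≤ 2 * β * τ := by
  rw [abs_le] at hab hce hac hbe
  rcases le_total b a with hba | hab' <;> rcases le_total e c with hec | hce'
  · exact rpow_quadruple_le_of_le_of_le hβ₁ hβ₂ hb he (by linarith) (by linarith) hτ
      (by linarith) hquad hba hec
  · have := rpow_sub_rpow_le_quadratic_add_linear hβ₁ hβ₂ hb hba
    have := rpow_sub_rpow_le_quadratic_add_linear hβ₁ hβ₂ hc hce'
    have := quadratic_add_linear_le hβ₁ hβ₂ (X := a ^ 2 - b ^ 2 + (e ^ 2 - c ^ 2)) (by linarith)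
      (by linarith : a - b ≤ τ) (by linarith : e - c ≤ τ)
    linarith
  · have := rpow_le_rpow ha hab' (by linarith : 0 ≤ β)
    have := rpow_le_rpow he hec (by linarith : 0 ≤ β)
    nlinarith
  -- the hypotheses are invariant under `(a, b, c, e) ↦ (e, c, b, a)`
  · have := rpow_quadruple_le_of_le_of_le hβ₁ hβ₂ hc ha (by linarith) (by linarith) hτ
      (by linarith) (by linarith) hce' hab'
    linarith

theorem rpow_quadruple_le_of_le_two_mul {β h τ a b c e : ℝ} (hβ₁ : 1 ≤ β) (hβ₂ : β ≤ 2)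
    (hh : 0 ≤ h) (ha : 0 ≤ a) (hb : 0 ≤ b) (hc : 0 ≤ c) (he : 0 ≤ e) (hab : |a - b| ≤ τ)
    (hce : |c - e| ≤ τ) (hac : |a - c| ≤ 2 * h) (hbe : |b - e| ≤ 2 * h) (hτ : τ ≤ 2 * h)
    (hquad : a ^ 2 - b ^ 2 - c ^ 2 + e ^ 2 ≤ 4 * h * τ) :
    a ^ β - b ^ β - c ^ β + e ^ β ≤ 2 * β * h ^ (β - 1) * τ := by
  rcases hh.eq_or_lt with rfl | hh
  · have hτ₀ : τ = 0 := le_antisymm (by linarith) ((abs_nonneg _).trans hab)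
    subst hτ₀
    rw [abs_nonpos_iff, sub_eq_zero] at hab hce
    simp [hab, hce]
  -- both sides are homogeneous of degree `β`: rescale to `h = 1`
  have hdiv : ∀ x y : ℝ, |x / h - y / h| = |x - y| / h := fun x y => by
    rw [← sub_div, abs_div, abs_of_pos hh]
  have key := rpow_quadruple_le_of_abs_sub_le_two (τ := τ / h) hβ₁ hβ₂ (div_nonneg ha hh.le)
    (div_nonneg hb hh.le) (div_nonneg hc hh.le) (div_nonneg he hh.le)
    (by rw [hdiv]; gcongr) (by rw [hdiv]; gcongr)
    (by rw [hdiv, div_le_iff₀ hh]; linarith) (by rw [hdiv, div_le_iff₀ hh]; linarith)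
    (by rw [div_le_iff₀ hh]; linarith)
    (by field_simp; linarith)
  rw [div_rpow ha hh.le, div_rpow hb hh.le, div_rpow hc hh.le, div_rpow he hh.le] at key
  have hpow : h ^ β = h ^ (β - 1) * h := by rw [← rpow_add_one hh.ne']; ring_nf
  have hpos : 0 < h ^ β := rpow_pos_of_pos hh β
  calc a ^ β - b ^ β - c ^ β + e ^ β
      = h ^ β * (a ^ β / h ^ β - b ^ β / h ^ β - c ^ β / h ^ β + e ^ β / h ^ β) := by
        field_simp
    _ ≤ h ^ β * (2 * β * (τ / h)) := by gcongr
    _ = 2 * β * h ^ (β - 1) * τ := by rw [hpow]; field_simp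

theorem rpow_sub_one_mul_le_rpow_sub_one_mul {β s t : ℝ} (hβ : β ≤ 2) (hs : 0 ≤ s)
    (hst : s ≤ t) : t ^ (β - 1) * s ≤ s ^ (β - 1) * t := by
  rcases hs.eq_or_lt with rfl | hs
  · simpa using mul_nonneg (rpow_nonneg le_rfl (β - 1)) (hs.trans hst)
  have hsplit : ∀ {x : ℝ}, 0 < x → x ^ (β - 1) = x ^ (β - 2) * x := fun hx => by
    rw [← rpow_add_one hx.ne']; ring_nf
  rw [hsplit hs, hsplit (hs.trans_le hst)]
  have := rpow_le_rpow_of_nonpos hs hst (by linarith : β - 2 ≤ 0)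
  nlinarith [mul_pos hs (hs.trans_le hst)]

theorem rpow_quadruple_le {β σ τ a b c e : ℝ} (hβ₁ : 1 ≤ β) (hβ₂ : β ≤ 2)
    (ha : 0 ≤ a) (hb : 0 ≤ b) (hc : 0 ≤ c) (he : 0 ≤ e) (hab : |a - b| ≤ τ)
    (hce : |c - e| ≤ τ) (hac : |a - c| ≤ σ) (hbe : |b - e| ≤ σ)
    (hquad : a ^ 2 - b ^ 2 - c ^ 2 + e ^ 2 ≤ 2 * σ * τ) :
    a ^ β - b ^ β - c ^ β + e ^ β ≤ 2 * β * (σ / 2) ^ (β - 1) * τ := by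
  have hσ : 0 ≤ σ := (abs_nonneg _).trans hac
  have hτ : 0 ≤ τ := (abs_nonneg _).trans hab
  rcases le_total τ σ with hτσ | hστ
  · exact rpow_quadruple_le_of_le_two_mul hβ₁ hβ₂ (by positivity) ha hb hc he hab hce
      (by linarith) (by linarith) (by linarith) (by linarith)
  have key := rpow_quadruple_le_of_le_two_mul (h := τ / 2) (τ := σ) hβ₁ hβ₂ (by positivity)
    ha hc hb he hac hbe (by linarith) (by linarith) (by linarith) (by linarith)
  have hcmp := rpow_sub_one_mul_le_rpow_sub_one_mul hβ₂ (by positivity : 0 ≤ σ / 2)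
    (by linarith : σ / 2 ≤ τ / 2)
  nlinarith

theorem stmt_16 {Q : Type*} [MetricSpace Q] (y z q p : Q) (α : ℝ)
    (hα1 : 1 / 2 ≤ α) (hα2 : α ≤ 1)
    (hquad : dist y q ^ 2 - dist y p ^ 2 - dist z q ^ 2 + dist z p ^ 2 ≤
      2 * dist y z * dist q p) :
    dist y q ^ (2 * α) - dist y p ^ (2 * α) - dist z q ^ (2 * α) + dist z p ^ (2 * α) ≤
      8 * α * (2 : ℝ) ^ (-(2 * α)) * dist y z ^ (2 * α - 1) * dist q p := by
  have key := rpow_quadruple_le (β := 2 * α) (by linarith) (by linarith) dist_nonneg dist_nonneg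
    dist_nonneg dist_nonneg
    (by simpa only [dist_comm y] using abs_dist_sub_le q p y)
    (by simpa only [dist_comm z] using abs_dist_sub_le q p z)
    (abs_dist_sub_le y z q) (abs_dist_sub_le y z p) hquad
  have hconst : (2 : ℝ) ^ (2 * α - 1) * (2 : ℝ) ^ (-(2 * α)) = 1 / 2 := by
    rw [← rpow_add two_pos, show 2 * α - 1 + -(2 * α) = -1 by ring, rpow_neg_one]; norm_num
  calc _ ≤ 2 * (2 * α) * (dist y z / 2) ^ (2 * α - 1) * dist q p := key
    _ = 8 * α * (2 : ℝ) ^ (-(2 * α)) * dist y z ^ (2 * α - 1) * dist q p := by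
        rw [div_rpow dist_nonneg zero_le_two]
        field_simp
        linear_combination (-8 * dist y z ^ (2 * α - 1) * dist q p) * hconst
end

section
/- Let a, b, c ≥ 0, r, s ∈ [−1,1], α ∈ [1/2,1], and assume ra − sc ≥ 0. Define F(r) = a^(2α) − c^(2α) − (a² − 2rab + b²)^α + (c² − 2scb + b²)^α − 8α·2^(−2α)·b·(ra − sc)^(2α−1). Then F is convex as a function of r (its second derivative in r is nonnegative wherever defined). -/
/-!
Each of the two powers in `F` is a power with exponent in `[0, 1]` (namely `α` and `2α - 1`) of
a function that is affine in `r` and nonnegative on the domain, hence concave there. Since `F`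
is a constant minus the first power minus a nonnegative multiple of the second, it is convex.
-/

open Set

lemma lineMap_apply_eq_mul_add (m k r : ℝ) : AffineMap.lineMap k (m + k) r = r * m + k := by
  rw [AffineMap.lineMap_apply_ring']
  ring_nf

lemma convex_setOf_pos_mul_add (m k : ℝ) : Convex ℝ {r : ℝ | 0 < r * m + k} := by
  simpa only [preimage, mem_Ioi, lineMap_apply_eq_mul_add] using
    (convex_Ioi (𝕜 := ℝ) (0 : ℝ)).affine_preimage (AffineMap.lineMap k (m + k))

lemma concaveOn_rpow_mul_add {p : ℝ} (hp₀ : 0 ≤ p) (hp₁ : p ≤ 1) (m k : ℝ) {s : Set ℝ}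
    (hs : Convex ℝ s) (hnonneg : ∀ r ∈ s, 0 ≤ r * m + k) :
    ConcaveOn ℝ s (fun r => (r * m + k) ^ p) := by
  have h := ((Real.concaveOn_rpow hp₀ hp₁).comp_affineMap (AffineMap.lineMap k (m + k))).subset
    (fun r hr => by simpa only [mem_preimage, mem_Ici, lineMap_apply_eq_mul_add] using hnonneg r hr) hs
  simpa only [Function.comp_def, lineMap_apply_eq_mul_add] using h

theorem stmt_17_general (a b c s α : ℝ) (hb : 0 ≤ b)
    (hα1 : 1 / 2 ≤ α) (hα2 : α ≤ 1) :
    ConvexOn ℝ {r : ℝ | r ∈ Set.Icc (-1 : ℝ) 1 ∧ 0 < r * a - s * c}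
      (fun r =>
        a ^ (2 * α) - c ^ (2 * α) - (a ^ 2 - 2 * r * a * b + b ^ 2) ^ α
          + (c ^ 2 - 2 * s * c * b + b ^ 2) ^ α
          - 8 * α * (2 : ℝ) ^ (-(2 * α)) * b * (r * a - s * c) ^ (2 * α - 1)) := by
  set T := {r : ℝ | r ∈ Icc (-1 : ℝ) 1 ∧ 0 < r * a - s * c}
  have hT : Convex ℝ T := by
    have hhalf := convex_setOf_pos_mul_add a (-(s * c))
    simp only [← sub_eq_add_neg] at hhalf
    exact (convex_Icc (-1 : ℝ) 1).inter hhalf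
  have hdist : ConcaveOn ℝ T (fun r => (r * (-(2 * a * b)) + (a ^ 2 + b ^ 2)) ^ α) := by
    refine concaveOn_rpow_mul_add (by linarith) hα2 _ _ hT fun r ⟨⟨hr₁, hr₂⟩, _⟩ => ?_
    -- `a² - 2rab + b² = (a - rb)² + (1 - r²) b²`
    nlinarith [sq_nonneg (a - r * b), mul_nonneg (mul_nonneg (by linarith : 0 ≤ 1 - r)
      (by linarith : 0 ≤ 1 + r)) (sq_nonneg b)]
  have hgap : ConcaveOn ℝ T (fun r => (r * a + -(s * c)) ^ (2 * α - 1)) :=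
    concaveOn_rpow_mul_add (by linarith) (by linarith) _ _ hT fun r hr => by linarith [hr.2]
  have hcoef : 0 ≤ 8 * α * (2 : ℝ) ^ (-(2 * α)) * b := by positivity
  refine ((hdist.add (hgap.smul hcoef)).neg.add_const
    (a ^ (2 * α) - c ^ (2 * α) + (c ^ 2 - 2 * s * c * b + b ^ 2) ^ α)).congr fun r _ => ?_
  simp only [Pi.neg_apply, Pi.add_apply, smul_eq_mul, ← sub_eq_add_neg]
  ring_nf

theorem stmt_17 (a b c s α : ℝ) (ha : 0 ≤ a) (hb : 0 ≤ b) (hc : 0 ≤ c)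
    (hs1 : -1 ≤ s) (hs2 : s ≤ 1) (hα1 : 1 / 2 ≤ α) (hα2 : α ≤ 1) :
    ConvexOn ℝ {r : ℝ | r ∈ Set.Icc (-1 : ℝ) 1 ∧ 0 < r * a - s * c}
      (fun r =>
        a ^ (2 * α) - c ^ (2 * α) - (a ^ 2 - 2 * r * a * b + b ^ 2) ^ α
          + (c ^ 2 - 2 * s * c * b + b ^ 2) ^ α
          - 8 * α * (2 : ℝ) ^ (-(2 * α)) * b * (r * a - s * c) ^ (2 * α - 1)) :=
  stmt_17_general a b c s α hb hα1 hα2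
end

section
/- Let β > 0, γ > 1, and for n ≥ 3 set ξ_n = 1 − 1/log(n). Then (n^(−1/2)·(1−ξ_n)^(−β))^(1/(γ−ξ_n)) ≤ c_γ · n^(−1/(2(γ−1))) · (log n)^(β/(γ−1)), where c_γ = exp(1/(2(γ−1)²)). -/
/-! With `L = log n` and `d = γ - 1`, the left side is `n ^ (-e/2) * L ^ (β e)` where
`e = 1 / (d + 1/L) ≤ 1/d`. Since `L ≥ 1`, the logarithmic factor is at most `L ^ (β/d)`.
For the power of `n`, the exponent deficit `1/d - e ≤ 1/(L d²)` costs a factor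
`exp (L (1/d - e) / 2) ≤ exp (1/(2 d²))`, because the `L = log n` cancels. -/

open Real

lemma one_div_sub_one_div_add_le {d δ : ℝ} (hd : 0 < d) (hδ : 0 ≤ δ) :
    1 / d - 1 / (d + δ) ≤ δ / d ^ 2 := by
  rw [div_sub_div _ _ hd.ne' (by positivity), div_le_div_iff₀ (by positivity) (by positivity)]
  nlinarith [mul_nonneg hδ (mul_nonneg hδ hd.le), sq_nonneg d]

lemma rpow_neg_le_exp_mul_rpow_neg {x a b c : ℝ} (hx : 0 < x) (h : log x * (b - a) ≤ c) :
    x ^ (-a) ≤ exp c * x ^ (-b) := by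
  rw [rpow_def_of_pos hx, rpow_def_of_pos hx, ← exp_add, exp_le_exp]
  linarith

lemma rpow_mul_log_pow_le {x d β : ℝ} (hx : exp 1 ≤ x) (hd : 0 < d) (hβ : 0 ≤ β) :
    (x ^ (-(1 / 2 : ℝ)) * (log x)⁻¹ ^ (-β)) ^ (1 / (d + (log x)⁻¹)) ≤
      exp (1 / (2 * d ^ 2)) * x ^ (-(1 / (2 * d))) * log x ^ (β / d) := by
  have hx_pos : 0 < x := (exp_pos 1).trans_le hx
  have hL : 1 ≤ log x := (le_log_iff_exp_le hx_pos).mpr hx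
  have hL_pos : 0 < log x := by linarith
  set L := log x
  set e := 1 / (d + L⁻¹)
  have he_le : e ≤ 1 / d := one_div_le_one_div_of_le hd (by simp [hL_pos.le])
  have hLHS : (x ^ (-(1 / 2 : ℝ)) * L⁻¹ ^ (-β)) ^ e = x ^ (-(e / 2)) * L ^ (β * e) := by
    rw [inv_rpow hL_pos.le, rpow_neg hL_pos.le, inv_inv, mul_rpow (by positivity) (by positivity),
      ← rpow_mul hx_pos.le, ← rpow_mul hL_pos.le, neg_mul, one_div_mul_eq_div]
  have hx_factor : x ^ (-(e / 2)) ≤ exp (1 / (2 * d ^ 2)) * x ^ (-(1 / (2 * d))) := by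
    refine rpow_neg_le_exp_mul_rpow_neg hx_pos ?_
    calc L * (1 / (2 * d) - e / 2) = L / 2 * (1 / d - e) := by ring
      _ ≤ L / 2 * (L⁻¹ / d ^ 2) := by
        gcongr; exact one_div_sub_one_div_add_le hd (by positivity)
      _ = 1 / (2 * d ^ 2) := by field_simp
  have hL_factor : L ^ (β * e) ≤ L ^ (β / d) :=
    rpow_le_rpow_of_exponent_le hL (by rw [div_eq_mul_one_div]; gcongr)
  rw [hLHS]
  gcongr

theorem stmt_19 (β γ : ℝ) (hβ : 0 < β) (hγ : 1 < γ) (n : ℕ) (hn : 3 ≤ n) :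
    (((n : ℝ) ^ (-(1 / 2 : ℝ)) * (1 - (1 - 1 / Real.log n)) ^ (-β)) ^
        (1 / (γ - (1 - 1 / Real.log n)))) ≤
      Real.exp (1 / (2 * (γ - 1) ^ 2)) * (n : ℝ) ^ (-(1 / (2 * (γ - 1)))) *
        Real.log n ^ (β / (γ - 1)) := by
  rw [show 1 - (1 - 1 / log n) = (log n)⁻¹ by ring,
    show γ - (1 - 1 / log n) = γ - 1 + (log n)⁻¹ by ring]
  have hn_ge : exp 1 ≤ n := by
    have : (3 : ℝ) ≤ n := by exact_mod_cast hn
    linarith [exp_one_lt_d9]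
  exact rpow_mul_log_pow_le hn_ge (by linarith) hβ.le
end
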